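/- arXiv:0803.3570 — 10 statements merged into one kernel-verified Lean document; each statement's English description precedes it below -/
import Mathlib

section
/- Let F be a field and α, β ∈ F with α ≠ 0 and α not a root of unity (αᵏ ≠ 1 for all integers k ≥ 1; in particular α ≠ 1). Let φ be the F-algebra automorphism of the polynomial ring F[t] determined by φ(t) = αt + β, and set t̃ = (α − 1)t + β. If J is a nonzero proper ideal of F[t] with φ(J) ⊆ J, then there exists an integer n ≥ 1 such that J is the principal ideal generated by t̃ⁿ. -/
/-!
Conjugating by the automorphism `t ↦ t̃` of `F[t]` turns `φ` into the scaling `t ↦ α t`, since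
`φ(t̃) = α t̃`. A generator `g` of a scaling-stable ideal divides `g(α t)`, which has the same
degree, so `g(α t) = αⁿ g(t)` with `n = deg g`. Comparing coefficients, `αⁱ = αⁿ` for every
`i` with a nonzero coefficient, and as `α` is not a root of unity `g` is a monomial.
-/

open Polynomial

theorem pow_right_injective_of_forall_pow_ne_one {M₀ : Type*} [MonoidWithZero M₀]
    [IsLeftCancelMulZero M₀] {a : M₀} (ha₀ : a ≠ 0) (ha : ∀ k : ℕ, 1 ≤ k → a ^ k ≠ 1) :
    Function.Injective (a ^ · : ℕ → M₀) := by
  intro m n hmn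
  wlog hle : m ≤ n generalizing m n
  · exact (this hmn.symm (le_of_not_ge hle)).symm
  obtain ⟨k, rfl⟩ := Nat.exists_eq_add_of_le hle
  have hk : a ^ k = 1 :=
    mul_left_cancel₀ (pow_ne_zero m ha₀) (by simpa [pow_add] using hmn.symm)
  by_contra hne
  exact ha k (by omega) hk

namespace Polynomial

theorem comp_C_mul_X_eq_C_pow_mul_of_dvd {K : Type*} [Field K] {a : K} (ha : a ≠ 0) {p : K[X]}
    (hp : p ∣ p.comp (C a * X)) : p.comp (C a * X) = C (a ^ p.natDegree) * p := by
  symm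
  apply eq_of_dvd_of_natDegree_le_of_leadingCoeff
  · exact (C_mul_dvd (pow_ne_zero _ ha)).mpr hp
  · rw [natDegree_comp, natDegree_C_mul_X a ha, mul_one, natDegree_C_mul (pow_ne_zero _ ha)]
  · rw [leadingCoeff_comp (by rw [natDegree_C_mul_X a ha]; exact one_ne_zero),
      leadingCoeff_C_mul_X, leadingCoeff_mul, leadingCoeff_C, mul_comm]

theorem eq_C_mul_X_pow_of_comp_C_mul_X_eq {R : Type*} [CommRing R] [IsDomain R] {a : R}
    (ha : Function.Injective (a ^ · : ℕ → R)) {p : R[X]}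
    (hp : p.comp (C a * X) = C (a ^ p.natDegree) * p) :
    p = C p.leadingCoeff * X ^ p.natDegree := by
  ext i
  rw [coeff_C_mul_X_pow]
  split_ifs with hi
  · rw [hi, coeff_natDegree]
  · have hcoeff : p.coeff i * a ^ i = a ^ p.natDegree * p.coeff i := by
      rw [← comp_C_mul_X_coeff, hp, coeff_C_mul]
    by_contra hpi
    exact ha.ne hi (mul_left_cancel₀ hpi (hcoeff.trans (mul_comm _ _)))

theorem exists_eq_span_X_pow_of_comp_C_mul_X_mem {K : Type*} [Field K] {a : K}
    (ha : Function.Injective (a ^ · : ℕ → K)) {I : Ideal K[X]} (hI : I ≠ ⊥)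
    (hstab : ∀ p ∈ I, p.comp (C a * X) ∈ I) : ∃ n : ℕ, I = Ideal.span {X ^ n} := by
  have ha₀ : a ≠ 0 := fun h => ha.ne (show 1 ≠ 2 by decide) (by simp [h])
  set g := Submodule.IsPrincipal.generator I
  have hIg : I = Ideal.span {g} := (Ideal.span_singleton_generator I).symm
  have hg : g ≠ 0 := by
    rintro hg
    exact hI (by rw [hIg, hg, Ideal.span_singleton_eq_bot])
  have hdvd : g ∣ g.comp (C a * X) := by
    rw [← Ideal.mem_span_singleton, ← hIg]
    exact hstab g (hIg ▸ Ideal.mem_span_singleton_self g)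
  have hmonomial :=
    eq_C_mul_X_pow_of_comp_C_mul_X_eq ha (comp_C_mul_X_eq_C_pow_mul_of_dvd ha₀ hdvd)
  refine ⟨g.natDegree, ?_⟩
  rw [hIg, hmonomial, natDegree_C_mul_X_pow _ _ (leadingCoeff_ne_zero.mpr hg)]
  exact Ideal.span_singleton_mul_left_unit (isUnit_C.mpr (leadingCoeff_ne_zero.mpr hg).isUnit) _

theorem map_algEquivCMulXAddC_sub_one {R : Type*} [CommRing R] {α β : R} [Invertible (α - 1)]
    (φ : R[X] →ₐ[R] R[X]) (hφ : φ X = C α * X + C β) (p : R[X]) :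
    φ (algEquivCMulXAddC (α - 1) β p) = algEquivCMulXAddC (α - 1) β (p.comp (C α * X)) := by
  rw [algEquivCMulXAddC_apply, algEquivCMulXAddC_apply, ← aeval_algHom_apply, aeval_comp]
  congr 2
  have hC : ∀ r, φ (C r) = C r := φ.commutes
  simp only [map_add, map_mul, map_sub, map_one, hφ, hC, aeval_C, aeval_X, algebraMap_eq]
  ring

end Polynomial

/-- Let `F` be a field, `α, β ∈ F` with `α ≠ 0` and `α` not a root of
unity.  Let `φ` be the `F`-algebra automorphism of `F[t]` with `φ(t) = αt + β` and set
`t̃ = (α − 1)t + β`.  If `J` is a nonzero proper `φ`-stable ideal of `F[t]`, then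
`J = (t̃ⁿ)` for some `n ≥ 1`. -/
theorem stmt_1 {F : Type*} [Field F] (α β : F) (hα0 : α ≠ 0)
    (hru : ∀ k : ℕ, 1 ≤ k → α ^ k ≠ 1)
    (φ : Polynomial F ≃ₐ[F] Polynomial F)
    (hφ : φ X = C α * X + C β)
    (J : Ideal (Polynomial F)) (hJbot : J ≠ ⊥) (hJtop : J ≠ ⊤)
    (hstab : ∀ f ∈ J, φ f ∈ J) :
    ∃ n : ℕ, 1 ≤ n ∧ J = Ideal.span {(C (α - 1) * X + C β) ^ n} := by
  let _ : Invertible (α - 1) := invertibleOfNonzero (sub_ne_zero.mpr (by simpa using hru 1 le_rfl))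
  set σ := algEquivCMulXAddC (α - 1) β
  have hJσ : J = (J.comap σ).map σ := (Ideal.map_comap_of_surjective σ σ.surjective J).symm
  obtain ⟨n, hn⟩ : ∃ n : ℕ, J.comap σ = Ideal.span {X ^ n} := by
    refine exists_eq_span_X_pow_of_comp_C_mul_X_mem
      (pow_right_injective_of_forall_pow_ne_one hα0 hru) ?_ fun p hp => ?_
    · exact fun h => hJbot (by rw [hJσ, h, Ideal.map_bot])
    · rw [Ideal.mem_comap, ← map_algEquivCMulXAddC_sub_one (φ : F[X] →ₐ[F] F[X]) hφ]
      exact hstab _ hp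
  have hJ : J = Ideal.span {(C (α - 1) * X + C β) ^ n} := by
    rw [hJσ, hn, Ideal.map_span, Set.image_singleton, map_pow]
    simp [σ]
  refine ⟨n, Nat.one_le_iff_ne_zero.mpr ?_, hJ⟩
  rintro rfl
  exact hJtop (by simpa using hJ)
end

section
/- Let F be a field and α, β ∈ F, where α ≠ 1 is a primitive ℓth root of unity (αˡ = 1 and αᵏ ≠ 1 for 1 ≤ k < ℓ). Let φ be the F-algebra automorphism of F[t] determined by φ(t) = αt + β, and set t̃ = (α − 1)t + β. If J is a nonzero proper ideal of F[t] with φ(J) ⊆ J, then there exist an integer n ≥ 0 and a polynomial g ∈ F[x] such that J is the principal ideal generated by t̃ⁿ · g(t̃^ℓ). -/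
open Polynomial

/-! In the coordinate `t̃ = (α - 1)t + β` the automorphism `φ` becomes `t̃ ↦ αt̃`, so pulling `J`
back along this change of variables gives a principal ideal `(p)` stable under `p(X) ↦ p(αX)`.
That substitution preserves degrees, so `p(αX) = c p`, i.e. `α ^ i = c` for every exponent `i`
of `p`. As `α` is a primitive `ℓ`-th root of unity, all exponents are then congruent mod `ℓ` to
the lowest one `n`, that is `p = Xⁿ g(X^ℓ)`. -/

namespace Polynomial

variable {R : Type*}

theorem expand_contract_of_coeff_eq_zero [CommSemiring R] {ℓ : ℕ} (hℓ : ℓ ≠ 0) {f : R[X]}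
    (hf : ∀ n, ¬ℓ ∣ n → f.coeff n = 0) : expand R ℓ (contract ℓ f) = f := by
  ext n
  rw [coeff_expand hℓ.bot_lt, coeff_contract hℓ]
  split_ifs with h
  · rw [Nat.div_mul_cancel h]
  · exact (hf n h).symm

theorem expand_comp [CommSemiring R] (ℓ : ℕ) (g q : R[X]) :
    (expand R ℓ g).comp q = aeval (q ^ ℓ) g := by
  rw [expand_eq_comp_X_pow, comp_assoc, X_pow_comp, comp_eq_aeval]

theorem algHom_apply_eq_comp [CommSemiring R] {A : Type*} [FunLike A R[X] R[X]]
    [AlgHomClass A R R[X] R[X]] (φ : A) (p : R[X]) :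
    φ p = p.comp (φ X) := by
  rw [comp_eq_aeval, aeval_algHom_apply, aeval_X_left_apply]

theorem comp_comp_C_mul_X_add_C_eq_comp_C_mul_X_comp [CommRing R] (α β : R) (q : R[X]) :
    (q.comp (C (α - 1) * X + C β)).comp (C α * X + C β) =
      (q.comp (C α * X)).comp (C (α - 1) * X + C β) := by
  simp only [comp_assoc, add_comp, mul_comp, C_comp, X_comp]
  congr 1
  simp only [C_sub, C_1]
  ring

variable [CommRing R] [IsDomain R]

theorem exists_eq_C_mul_of_dvd_of_natDegree_le {p q : R[X]} (hdvd : p ∣ q) (hq : q ≠ 0)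
    (hdeg : q.natDegree ≤ p.natDegree) : ∃ c, q = C c * p := by
  obtain ⟨r, rfl⟩ := hdvd
  obtain ⟨hp, hr⟩ := mul_ne_zero_iff.mp hq
  have hr0 : r.natDegree = 0 := by rw [natDegree_mul hp hr] at hdeg; omega
  exact ⟨r.coeff 0, by rw [mul_comm, ← eq_C_of_natDegree_eq_zero hr0]⟩

theorem exists_comp_C_mul_X_eq_C_mul_of_dvd {a : R} (ha : a ≠ 0) {p : R[X]} (hp : p ≠ 0)
    (hdvd : p ∣ p.comp (C a * X)) : ∃ c, p.comp (C a * X) = C c * p := by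
  refine exists_eq_C_mul_of_dvd_of_natDegree_le hdvd ?_ ?_
  · rwa [Ne, comp_C_mul_X_eq_zero_iff (mem_nonZeroDivisors_of_ne_zero ha)]
  · rw [natDegree_comp, natDegree_C_mul_X a ha, mul_one]

theorem pow_eq_of_comp_C_mul_X_eq_C_mul {a c : R} {p : R[X]} (h : p.comp (C a * X) = C c * p)
    {i : ℕ} (hi : p.coeff i ≠ 0) : a ^ i = c := by
  have := congr_arg (coeff · i) h
  simp only [comp_C_mul_X_coeff, coeff_C_mul] at this
  exact mul_left_cancel₀ hi (this.trans (mul_comm _ _))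

theorem exists_eq_X_pow_mul_expand_of_comp_C_mul_X_eq_C_mul {a c : R} {ℓ : ℕ}
    (ha : IsPrimitiveRoot a ℓ) (hℓ : 0 < ℓ) {p : R[X]} (hp : p ≠ 0)
    (h : p.comp (C a * X) = C c * p) : ∃ n g, p = X ^ n * expand R ℓ g := by
  set n := p.natTrailingDegree
  have han : a ^ n = c := pow_eq_of_comp_C_mul_X_eq_C_mul h
    (mem_support_iff.mp (natTrailingDegree_mem_support_of_nonzero hp))
  have hXn : X ^ n ∣ p :=
    X_pow_dvd_iff.mpr fun d hd => coeff_eq_zero_of_lt_natTrailingDegree hd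
  clear_value n
  obtain ⟨q, rfl⟩ := hXn
  refine ⟨n, contract ℓ q,
    (congr_arg _ (expand_contract_of_coeff_eq_zero hℓ.ne' fun i hi => ?_)).symm⟩
  by_contra hqi
  have hai : a ^ i * a ^ n = 1 * a ^ n := by
    rw [← pow_add, one_mul, han]
    exact pow_eq_of_comp_C_mul_X_eq_C_mul h (by rwa [coeff_X_pow_mul])
  have ha0 : a ≠ 0 := ha.ne_zero hℓ.ne'
  exact hi ((ha.pow_eq_one_iff_dvd i).mp (mul_right_cancel₀ (pow_ne_zero n ha0) hai))

end Polynomial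

theorem stmt_2_general {F : Type*} [Field F] (α β : F) (ℓ : ℕ) (hℓ : 1 ≤ ℓ)
    (hα1 : α ≠ 1) (hαℓ : α ^ ℓ = 1)
    (hprim : ∀ k : ℕ, 1 ≤ k → k < ℓ → α ^ k ≠ 1)
    (φ : Polynomial F ≃ₐ[F] Polynomial F)
    (hφ : φ X = C α * X + C β)
    (J : Ideal (Polynomial F)) (hJbot : J ≠ ⊥)
    (hstab : ∀ f ∈ J, φ f ∈ J) :
    ∃ (n : ℕ) (g : Polynomial F),
      J = Ideal.span
        {(C (α - 1) * X + C β) ^ n * Polynomial.aeval ((C (α - 1) * X + C β) ^ ℓ) g} := by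
  have hα : IsPrimitiveRoot α ℓ := .mk_of_lt α hℓ hαℓ hprim
  have : Invertible (α - 1) := invertibleOfNonzero (sub_ne_zero.mpr hα1)
  set e := algEquivCMulXAddC (α - 1) β
  have he : ∀ q, e q = q.comp (C (α - 1) * X + C β) := fun _ => rfl
  obtain ⟨p, hp⟩ : ∃ p, J.comap e = Ideal.span {p} :=
    (IsPrincipalIdealRing.principal _).principal
  have hJ : J = (Ideal.span {p}).map e := by
    rw [← hp, Ideal.map_comap_of_surjective _ e.surjective]
  have hp0 : p ≠ 0 := by
    rintro rfl
    exact hJbot (by rw [hJ, Ideal.span_singleton_eq_bot.mpr rfl, Ideal.map_bot])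
  have hdvd : p ∣ p.comp (C α * X) := by
    rw [← Ideal.mem_span_singleton, ← hp, Ideal.mem_comap, he,
      ← comp_comp_C_mul_X_add_C_eq_comp_C_mul_X_comp, ← hφ, ← he, ← algHom_apply_eq_comp]
    exact hstab _ (Ideal.mem_comap.mp (hp ▸ Ideal.mem_span_singleton_self p))
  obtain ⟨c, hc⟩ := exists_comp_C_mul_X_eq_C_mul_of_dvd (hα.ne_zero (by omega)) hp0 hdvd
  obtain ⟨n, g, rfl⟩ := exists_eq_X_pow_mul_expand_of_comp_C_mul_X_eq_C_mul hα hℓ hp0 hc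
  refine ⟨n, g, ?_⟩
  rw [hJ, Ideal.map_span, Set.image_singleton, he, mul_comp, X_pow_comp, expand_comp]

/-- Let `F` be a field, `α ≠ 1` a primitive `ℓ`-th root of unity, `β ∈ F`.
Let `φ` be the `F`-algebra automorphism of `F[t]` with `φ(t) = αt + β` and set
`t̃ = (α − 1)t + β`.  If `J` is a nonzero proper `φ`-stable ideal of `F[t]`, then
`J = (t̃ⁿ · g(t̃^ℓ))` for some `n ≥ 0` and some polynomial `g ∈ F[x]`. -/
theorem stmt_2 {F : Type*} [Field F] (α β : F) (ℓ : ℕ) (hℓ : 1 ≤ ℓ)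
    (hα1 : α ≠ 1) (hαℓ : α ^ ℓ = 1)
    (hprim : ∀ k : ℕ, 1 ≤ k → k < ℓ → α ^ k ≠ 1)
    (φ : Polynomial F ≃ₐ[F] Polynomial F)
    (hφ : φ X = C α * X + C β)
    (J : Ideal (Polynomial F)) (hJbot : J ≠ ⊥) (hJtop : J ≠ ⊤)
    (hstab : ∀ f ∈ J, φ f ∈ J) :
    ∃ (n : ℕ) (g : Polynomial F),
      J = Ideal.span
        {(C (α - 1) * X + C β) ^ n * Polynomial.aeval ((C (α - 1) * X + C β) ^ ℓ) g} :=
  stmt_2_general α β ℓ hℓ hα1 hαℓ hprim φ hφ J hJbot hstab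
end

section
/- Let F be an algebraically closed field, α, β ∈ F with α ≠ 0 and α ≠ 1, let φ be the F-algebra automorphism of F[t] with φ(t) = αt + β, and set t̃ = (α − 1)t + β. Let J be a nonzero ideal of F[t] with φ(J) ⊆ J. Then: (i) if α is not a root of unity, J is a proper ideal maximal among proper φ-stable ideals of F[t] if and only if J is the principal ideal generated by t̃; (ii) if α is a primitive ℓth root of unity, J is a proper ideal maximal among proper φ-stable ideals of F[t] if and only if J is the principal ideal generated by t̃, or J is the principal ideal generated by t̃^ℓ − ξ for some nonzero ξ ∈ F. -/
/-!
Conjugating by the affine automorphism `t ↦ t̃` turns `φ` into the dilation `f(t) ↦ f(αt)`, which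
fixes `t` up to a scalar. A nonzero ideal `(g)` is stable under the dilation iff `g(αt) = c g(t)`,
i.e. `α^i` is the same for all exponents `i` occurring in `g`. If `g(0) = 0` then `(g) ⊆ (t)`, a
maximal ideal. Otherwise `α^i = 1` for every exponent of `g`: when `α` is not a root of unity this
forces `g` to be constant, and when `α` is a primitive `ℓ`th root of unity it makes `g` a polynomial
in `t^ℓ`, so `(g) ⊆ (t^ℓ - ξ)` for a root `ξ ≠ 0` of that polynomial. Finally, a stable `(h) ⊋ (t^ℓ - ξ)`
would have `h(0) ≠ 0`, hence `ℓ ∣ deg h`, which leaves only `h ~ t^ℓ - ξ`.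
-/

open Polynomial Function Set

section MaximalStable

variable {R S : Type*} [CommSemiring R] [CommSemiring S]

def IsMaximalStable (φ : R → R) (J : Ideal R) : Prop :=
  J ≠ ⊤ ∧ ∀ J' : Ideal R, J ≤ J' → J' ≠ ⊤ → MapsTo φ J' J' → J' = J

lemma Ideal.IsMaximal.isMaximalStable {J : Ideal R} (hJ : J.IsMaximal) (φ : R → R) :
    IsMaximalStable φ J :=
  ⟨hJ.ne_top, fun _ hle hne _ => (hJ.eq_of_le hne hle).symm⟩

lemma mapsTo_span_singleton_iff {G : Type*} [FunLike G R R] [MulHomClass G R R] {σ : G}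
    {p : R} : MapsTo σ (Ideal.span {p} : Set R) (Ideal.span {p}) ↔ p ∣ σ p := by
  refine ⟨fun h => Ideal.mem_span_singleton.1 (h (Ideal.mem_span_singleton_self p)),
    fun h f hf => ?_⟩
  rw [SetLike.mem_coe, Ideal.mem_span_singleton] at hf ⊢
  exact h.trans (map_dvd σ hf)

variable (ψ : R ≃+* S) {σ : R → R} {φ : S → S}

lemma mapsTo_comap_iff (h : Semiconj ψ σ φ) (K : Ideal S) :
    MapsTo σ (K.comap ψ) (K.comap ψ) ↔ MapsTo φ K K := by
  rw [Ideal.coe_comap]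
  refine ⟨fun hσ y hy => ?_, h.mapsTo_preimage⟩
  obtain ⟨x, rfl⟩ := ψ.surjective y
  rw [← h.eq]
  exact hσ hy

lemma isMaximalStable_comap_iff (h : Semiconj ψ σ φ) (J : Ideal S) :
    IsMaximalStable σ (J.comap ψ) ↔ IsMaximalStable φ J := by
  set e := ψ.idealComapOrderIso
  have he : ∀ K, e K = K.comap ψ := fun _ => rfl
  constructor
  · rintro ⟨hne, hmax⟩
    refine ⟨fun hJ => hne (by rw [hJ, Ideal.comap_top]), fun J' hle hne' hJ' => ?_⟩
    refine e.injective (hmax _ (e.monotone hle) ?_ ((mapsTo_comap_iff ψ h J').2 hJ'))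
    rwa [he, Ne, Ideal.comap_eq_top_iff]
  · rintro ⟨hne, hmax⟩
    refine ⟨by rwa [Ne, Ideal.comap_eq_top_iff], fun K hle hK hKst => ?_⟩
    obtain ⟨J', rfl⟩ := e.surjective K
    rw [he, Ne, Ideal.comap_eq_top_iff] at hK
    rw [he, mapsTo_comap_iff ψ h] at hKst
    exact congrArg e (hmax J' (e.le_iff_le.1 hle) hK hKst)

lemma eq_span_singleton_apply_iff (J : Ideal S) (p : R) :
    J = Ideal.span {ψ p} ↔ J.comap ψ = Ideal.span {p} := by
  have : (Ideal.span {ψ p}).comap ψ = Ideal.span {p} := by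
    rw [← Ideal.map_symm, Ideal.map_span, Set.image_singleton, ψ.symm_apply_apply]
  rw [← this]
  exact ψ.idealComapOrderIso.injective.eq_iff.symm

end MaximalStable

lemma expand_contract_of_coeff_ne_zero {R : Type*} [CommSemiring R] {p : ℕ} (hp : p ≠ 0)
    {f : R[X]} (hf : ∀ i, f.coeff i ≠ 0 → p ∣ i) : expand R p (contract p f) = f := by
  ext n
  rw [coeff_expand hp.bot_lt]
  split_ifs with hn
  · rw [coeff_contract hp, Nat.div_mul_cancel hn]
  · exact (not_imp_comm.1 (hf n) hn).symm

lemma exists_X_pow_sub_C_dvd {F : Type*} [Field F] [IsAlgClosed F] {ℓ : ℕ} (hℓ : ℓ ≠ 0)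
    {g : F[X]} (hg : 0 < g.natDegree) (hg0 : g.coeff 0 ≠ 0) (hgℓ : ∀ i, g.coeff i ≠ 0 → ℓ ∣ i) :
    ∃ ξ ≠ 0, X ^ ℓ - C ξ ∣ g := by
  set h := contract ℓ g
  have hgh : expand F ℓ h = g := expand_contract_of_coeff_ne_zero hℓ hgℓ
  have hh : h.degree ≠ 0 := by
    intro hdeg
    rw [← hgh, natDegree_expand, natDegree_eq_zero_iff_degree_le_zero.2 hdeg.le, zero_mul] at hg
    exact hg.false
  obtain ⟨ξ, hξ⟩ := IsAlgClosed.exists_root h hh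
  refine ⟨ξ, ?_, ?_⟩
  · rintro rfl
    rw [IsRoot, ← coeff_zero_eq_eval_zero, coeff_contract hℓ, zero_mul] at hξ
    exact hg0 hξ
  · simpa [hgh] using map_dvd (expand F ℓ) (dvd_iff_isRoot.2 hξ)

lemma algEquiv_apply_C {R : Type*} [CommSemiring R] (e : R[X] ≃ₐ[R] R[X]) (a : R) :
    e (C a) = C a :=
  e.commutes a

section Dilation

variable {F : Type*} [Field F] {α : F}

noncomputable def dilation (α : F) : F[X] →ₐ[F] F[X] := aeval (C α * X)

lemma dilation_apply (f : F[X]) : dilation α f = f.comp (C α * X) := rfl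

lemma coeff_dilation (f : F[X]) (n : ℕ) : (dilation α f).coeff n = α ^ n * f.coeff n := by
  rw [dilation_apply, comp_C_mul_X_coeff, mul_comm]

lemma dilation_X_pow_sub_C {ℓ : ℕ} (hα : α ^ ℓ = 1) (ξ : F) :
    dilation α (X ^ ℓ - C ξ) = X ^ ℓ - C ξ := by
  simp [dilation, mul_pow, ← C_pow, hα]

lemma pow_eq_pow_natDegree_of_dvd_dilation (hα : α ≠ 0) {g : F[X]} (hdvd : g ∣ dilation α g)
    {i : ℕ} (hi : g.coeff i ≠ 0) : α ^ i = α ^ g.natDegree := by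
  have hg : g ≠ 0 := fun h => hi (by rw [h, coeff_zero])
  obtain ⟨q, hq⟩ := hdvd
  have hq0 : q ≠ 0 := by
    rintro rfl
    simpa [coeff_dilation, hα, hi] using congrArg (coeff · i) hq
  have hqdeg : q.natDegree = 0 := by
    have := congrArg natDegree hq
    rw [dilation_apply, natDegree_comp, natDegree_C_mul_X α hα, mul_one,
      natDegree_mul hg hq0] at this
    omega
  rw [eq_C_of_natDegree_eq_zero hqdeg] at hq
  have hcoeff : ∀ j, g.coeff j ≠ 0 → α ^ j = q.coeff 0 := fun j hj =>
    mul_right_cancel₀ hj (by rw [← coeff_dilation, hq, coeff_mul_C, mul_comm])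
  rw [hcoeff i hi, hcoeff _ (mt leadingCoeff_eq_zero.1 hg)]

lemma pow_eq_one_of_dvd_dilation (hα : α ≠ 0) {g : F[X]} (hdvd : g ∣ dilation α g)
    (hg0 : g.coeff 0 ≠ 0) {i : ℕ} (hi : g.coeff i ≠ 0) : α ^ i = 1 := by
  rw [pow_eq_pow_natDegree_of_dvd_dilation hα hdvd hi,
    ← pow_eq_pow_natDegree_of_dvd_dilation hα hdvd hg0, pow_zero]

lemma semiconj_dilation {ψ φ : F[X] ≃ₐ[F] F[X]} (h : φ (ψ X) = C α * ψ X) :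
    Semiconj ψ (dilation α) φ := by
  have : (ψ : F[X] →ₐ[F] F[X]).comp (dilation α) = (φ : F[X] →ₐ[F] F[X]).comp ψ :=
    algHom_ext (by simp [dilation, h, algEquiv_apply_C])
  exact DFunLike.congr_fun this

end Dilation

section Classification

variable {F : Type*} [Field F] {α : F}

lemma natDegree_pos_of_span_ne_top {g : F[X]} (hg : g ≠ 0) (h : Ideal.span {g} ≠ ⊤) :
    0 < g.natDegree :=
  natDegree_pos_iff_degree_pos.2 <|
    degree_pos_of_ne_zero_of_nonunit hg (mt Ideal.span_singleton_eq_top.2 h)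

lemma isMaximalStable_span_X (σ : F[X] → F[X]) : IsMaximalStable σ (Ideal.span {X}) :=
  (PrincipalIdealRing.isMaximal_of_irreducible irreducible_X).isMaximalStable σ

lemma IsMaximalStable.eq_span_X_of_coeff_zero_eq_zero {g : F[X]}
    (h : IsMaximalStable (dilation α) (Ideal.span {g})) (hg0 : g.coeff 0 = 0) :
    Ideal.span {g} = Ideal.span {X} := by
  refine (h.2 _ (Ideal.span_singleton_le_span_singleton.2 (X_dvd_iff.2 hg0))
    (isMaximalStable_span_X (dilation α)).1 (mapsTo_span_singleton_iff.2 ?_)).symm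
  simp [dilation]

lemma isMaximalStable_span_X_pow_sub_C {ℓ : ℕ} (hα : IsPrimitiveRoot α ℓ) (hℓ : 0 < ℓ)
    {ξ : F} (hξ : ξ ≠ 0) : IsMaximalStable (dilation α) (Ideal.span {X ^ ℓ - C ξ}) := by
  have hp0 : (X ^ ℓ - C ξ : F[X]) ≠ 0 := X_pow_sub_C_ne_zero hℓ ξ
  refine ⟨fun htop => ?_, fun J' hle hne hst => ?_⟩
  · have := natDegree_eq_zero_of_isUnit (Ideal.span_singleton_eq_top.1 htop)
    rw [natDegree_X_pow_sub_C] at this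
    exact hℓ.ne' this
  obtain ⟨g, rfl⟩ : ∃ g, J' = Ideal.span {g} := (IsPrincipalIdealRing.principal J').principal
  have hdvd : g ∣ X ^ ℓ - C ξ := Ideal.span_singleton_le_span_singleton.1 hle
  have hg : g ≠ 0 := ne_zero_of_dvd_ne_zero hp0 hdvd
  have hg0 : g.coeff 0 ≠ 0 := fun h0 =>
    hξ (by simpa [X_dvd_iff, hℓ.ne] using (X_dvd_iff.2 h0).trans hdvd)
  have hℓg : ℓ ∣ g.natDegree := (hα.pow_eq_one_iff_dvd _).1 <|
    pow_eq_one_of_dvd_dilation (hα.ne_zero hℓ.ne') (mapsTo_span_singleton_iff.1 hst) hg0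
      (mt leadingCoeff_eq_zero.1 hg)
  refine Ideal.span_singleton_eq_span_singleton.2 (associated_of_dvd_of_natDegree_le hdvd hp0 ?_)
  rw [natDegree_X_pow_sub_C]
  exact Nat.le_of_dvd (natDegree_pos_of_span_ne_top hg hne) hℓg

variable {J : Ideal F[X]}

lemma isMaximalStable_dilation_iff_of_forall_pow_ne_one (hα0 : α ≠ 0)
    (hα : ∀ k : ℕ, 1 ≤ k → α ^ k ≠ 1) (hJ : J ≠ ⊥) (hst : MapsTo (dilation α) J J) :
    IsMaximalStable (dilation α) J ↔ J = Ideal.span {X} := by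
  refine ⟨fun hmax => ?_, fun h => h ▸ isMaximalStable_span_X _⟩
  obtain ⟨g, rfl⟩ : ∃ g, J = Ideal.span {g} := (IsPrincipalIdealRing.principal J).principal
  have hg : g ≠ 0 := mt Ideal.span_singleton_eq_bot.2 hJ
  refine hmax.eq_span_X_of_coeff_zero_eq_zero (not_not.1 fun hg0 => hα g.natDegree ?_ ?_)
  · exact natDegree_pos_of_span_ne_top hg hmax.1
  · exact pow_eq_one_of_dvd_dilation hα0 (mapsTo_span_singleton_iff.1 hst) hg0
      (mt leadingCoeff_eq_zero.1 hg)

lemma isMaximalStable_dilation_iff_of_isPrimitiveRoot [IsAlgClosed F] {ℓ : ℕ}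
    (hα : IsPrimitiveRoot α ℓ) (hℓ : 0 < ℓ) (hJ : J ≠ ⊥) (hst : MapsTo (dilation α) J J) :
    IsMaximalStable (dilation α) J ↔
      J = Ideal.span {X} ∨ ∃ ξ ≠ 0, J = Ideal.span {X ^ ℓ - C ξ} := by
  refine ⟨fun hmax => ?_, ?_⟩
  swap
  · rintro (rfl | ⟨ξ, hξ, rfl⟩)
    · exact isMaximalStable_span_X _
    · exact isMaximalStable_span_X_pow_sub_C hα hℓ hξ
  obtain ⟨g, rfl⟩ : ∃ g, J = Ideal.span {g} := (IsPrincipalIdealRing.principal J).principal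
  have hg : g ≠ 0 := mt Ideal.span_singleton_eq_bot.2 hJ
  by_cases hg0 : g.coeff 0 = 0
  · exact .inl (hmax.eq_span_X_of_coeff_zero_eq_zero hg0)
  obtain ⟨ξ, hξ, hdvd⟩ := exists_X_pow_sub_C_dvd hℓ.ne' (natDegree_pos_of_span_ne_top hg hmax.1)
    hg0 fun i hi => (hα.pow_eq_one_iff_dvd i).1 <|
      pow_eq_one_of_dvd_dilation (hα.ne_zero hℓ.ne') (mapsTo_span_singleton_iff.1 hst) hg0 hi
  refine .inr ⟨ξ, hξ, (hmax.2 _ (Ideal.span_singleton_le_span_singleton.2 hdvd)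
    (isMaximalStable_span_X_pow_sub_C hα hℓ hξ).1 (mapsTo_span_singleton_iff.2 ?_)).symm⟩
  exact dvd_of_eq (dilation_X_pow_sub_C hα.pow_eq_one ξ).symm

end Classification

/-- Let `F` be algebraically closed, `α ≠ 0, 1`, `φ(t) = αt + β`,
`t̃ = (α − 1)t + β`, and `J` a nonzero `φ`-stable ideal of `F[t]`.  Then:
(i) if `α` is not a root of unity, `J` is maximal among proper `φ`-stable ideals iff
`J = (t̃)`; (ii) if `α` is a primitive `ℓ`-th root of unity, `J` is maximal among proper
`φ`-stable ideals iff `J = (t̃)` or `J = (t̃^ℓ − ξ)` for some `ξ ≠ 0`. -/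
theorem stmt_3 {F : Type*} [Field F] [IsAlgClosed F] (α β : F)
    (hα0 : α ≠ 0) (hα1 : α ≠ 1)
    (φ : Polynomial F ≃ₐ[F] Polynomial F)
    (hφ : φ X = C α * X + C β)
    (J : Ideal (Polynomial F)) (hJbot : J ≠ ⊥)
    (hstab : ∀ f ∈ J, φ f ∈ J) :
    ((∀ k : ℕ, 1 ≤ k → α ^ k ≠ 1) →
      ((J ≠ ⊤ ∧ ∀ J' : Ideal (Polynomial F),
          J ≤ J' → J' ≠ ⊤ → (∀ f ∈ J', φ f ∈ J') → J' = J) ↔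
        J = Ideal.span {C (α - 1) * X + C β})) ∧
    (∀ ℓ : ℕ, 1 ≤ ℓ → α ^ ℓ = 1 → (∀ k : ℕ, 1 ≤ k → k < ℓ → α ^ k ≠ 1) →
      ((J ≠ ⊤ ∧ ∀ J' : Ideal (Polynomial F),
          J ≤ J' → J' ≠ ⊤ → (∀ f ∈ J', φ f ∈ J') → J' = J) ↔
        (J = Ideal.span {C (α - 1) * X + C β} ∨
          ∃ ξ : F, ξ ≠ 0 ∧ J = Ideal.span {(C (α - 1) * X + C β) ^ ℓ - C ξ}))) := by
  let : Invertible (α - 1) := invertibleOfNonzero (sub_ne_zero.2 hα1)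
  set ψ := algEquivCMulXAddC (α - 1) β
  have hψX : ψ X = C (α - 1) * X + C β := by simp [ψ]
  have hconj : Semiconj ψ (dilation α) φ := semiconj_dilation <| by
    simp only [hψX, map_add, map_mul, hφ, algEquiv_apply_C, map_sub, map_one]
    ring
  have hJ₀ : J.comap ψ.toRingEquiv ≠ ⊥ := fun h =>
    hJbot (ψ.toRingEquiv.idealComapOrderIso.injective (h.trans (OrderIso.map_bot _).symm))
  have hst₀ := (mapsTo_comap_iff ψ.toRingEquiv hconj J).2 hstab
  have hspan (p : F[X]) : J = Ideal.span {ψ p} ↔ J.comap ψ.toRingEquiv = Ideal.span {p} :=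
    eq_span_singleton_apply_iff ψ.toRingEquiv J p
  have hψpow (ℓ : ℕ) (ξ : F) : ψ X ^ ℓ - C ξ = ψ (X ^ ℓ - C ξ) := by
    rw [map_sub, map_pow, algEquiv_apply_C]
  rw [← hψX]
  simp only [hψpow, hspan]
  refine ⟨fun hα => ?_, fun ℓ hℓ hαℓ hmin => ?_⟩
  · exact (isMaximalStable_comap_iff ψ.toRingEquiv hconj J).symm.trans
      (isMaximalStable_dilation_iff_of_forall_pow_ne_one hα0 hα hJ₀ hst₀)
  · exact (isMaximalStable_comap_iff ψ.toRingEquiv hconj J).symm.trans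
      (isMaximalStable_dilation_iff_of_isPrimitiveRoot
        (.mk_of_lt α hℓ hαℓ hmin) hℓ hJ₀ hst₀)
end

section
/- Let F be a field of characteristic 0 and n ≥ 1. For each i = 1, …, n, let φᵢ be the F-algebra automorphism of the polynomial ring F[t₁, …, tₙ] determined by φᵢ(tⱼ) = tⱼ − δ_{i,j}. If J is an ideal of F[t₁, …, tₙ] with φᵢ(J) ⊆ J for all i, then J = 0 or J = F[t₁, …, tₙ]. -/
/-!
Let `f` be a nonzero element of `J` of minimal total degree. For a translation `τ` of the
variables, `τ f - f` has smaller total degree than `f`: the polynomials `p` of degree `≤ k` with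
`deg (τ p - p) < k` form a multiplicative filtration (product rule for `τ - 1`) containing the
variables. Since `φᵢ f - f ∈ J`, minimality forces `φᵢ f = f` for all `i`. Then `f` is constant on
the grid `(-ℕ)ⁿ`, a product of infinite sets in characteristic `0`, so `f` is a nonzero constant.
-/

open MvPolynomial

namespace MvPolynomial

variable {σ R : Type*} [CommRing R]

/-- `p ↦ p(X + c)`, the multivariate analogue of `Polynomial.taylor`. -/
noncomputable def taylor (c : σ → R) : MvPolynomial σ R →ₐ[R] MvPolynomial σ R :=
  aeval fun j => X j + C (c j)

theorem taylor_X (c : σ → R) (j : σ) : taylor c (X j) = X j + C (c j) :=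
  aeval_X _ _

theorem eval_taylor (x c : σ → R) (p : MvPolynomial σ R) :
    eval x (taylor c p) = eval (x + c) p := by
  rw [taylor, aeval_eq_bind₁, eval, eval₂Hom_bind₁]
  congr 2
  funext j
  simp

variable (σ R) in
noncomputable def restrictTotalDegreeLT (k : ℕ) : Submodule R (MvPolynomial σ R) :=
  restrictSupport R {t | t.degree < k}

theorem restrictTotalDegreeLT_le_restrictTotalDegree (k : ℕ) :
    restrictTotalDegreeLT σ R k ≤ restrictTotalDegree σ R k :=
  restrictSupport_mono R fun _ (ht : _ < k) => ht.le

theorem totalDegree_lt_of_mem_restrictTotalDegreeLT {k : ℕ} {p : MvPolynomial σ R}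
    (hp : p ∈ restrictTotalDegreeLT σ R k) (hp0 : p ≠ 0) : p.totalDegree < k := by
  obtain ⟨t, ht⟩ := support_nonempty.mpr hp0
  exact (Finset.sup_lt_iff ((Nat.zero_le _).trans_lt (hp ht))).mpr fun s hs => hp hs

open scoped Pointwise in
theorem mul_mem_restrictTotalDegreeLT {a b : ℕ} {p q : MvPolynomial σ R}
    (hp : p ∈ restrictTotalDegree σ R a) (hq : q ∈ restrictTotalDegreeLT σ R b) :
    p * q ∈ restrictTotalDegreeLT σ R (a + b) := by
  refine restrictSupport_mono R ?_ ((restrictSupport_add R _ _).ge (Submodule.mul_mem_mul hp hq))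
  rw [Set.add_subset_iff]
  intro s (hs : s.degree ≤ a) t (ht : t.degree < b)
  exact (map_add Finsupp.degree s t).trans_lt (Nat.add_lt_add_of_le_of_lt hs ht)

theorem mul_mem_restrictTotalDegree {a b : ℕ} {p q : MvPolynomial σ R}
    (hp : p ∈ restrictTotalDegree σ R a) (hq : q ∈ restrictTotalDegree σ R b) :
    p * q ∈ restrictTotalDegree σ R (a + b) := by
  rw [mem_restrictTotalDegree] at *
  exact (totalDegree_mul p q).trans (add_le_add hp hq)

noncomputable def taylorFiltration (c : σ → R) (k : ℕ) : Submodule R (MvPolynomial σ R) :=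
  restrictTotalDegree σ R k ⊓
    (restrictTotalDegreeLT σ R k).comap ((taylor c).toLinearMap - LinearMap.id)

variable {c : σ → R}

theorem mem_taylorFiltration {k : ℕ} {p : MvPolynomial σ R} :
    p ∈ taylorFiltration c k ↔
      p ∈ restrictTotalDegree σ R k ∧ taylor c p - p ∈ restrictTotalDegreeLT σ R k :=
  Iff.rfl

theorem taylor_mul_sub (p q : MvPolynomial σ R) :
    taylor c (p * q) - p * q =
      (taylor c p - p) * taylor c q + p * (taylor c q - q) := by
  rw [map_mul]
  ring

instance : SetLike.GradedMonoid (taylorFiltration c) where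
  one_mem := by
    simp [mem_taylorFiltration, mem_restrictTotalDegree]
  mul_mem {a b p q} hp hq := by
    rw [mem_taylorFiltration] at *
    refine ⟨mul_mem_restrictTotalDegree hp.1 hq.1, ?_⟩
    rw [taylor_mul_sub]
    have hq' : taylor c q ∈ restrictTotalDegree σ R b := by
      simpa using add_mem hq.1 (restrictTotalDegreeLT_le_restrictTotalDegree b hq.2)
    refine add_mem ?_ (mul_mem_restrictTotalDegreeLT hp.1 hq.2)
    rw [mul_comm, add_comm a b]
    exact mul_mem_restrictTotalDegreeLT hq' hp.2

theorem taylorFiltration_mono {k m : ℕ} (h : k ≤ m) :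
    taylorFiltration c k ≤ taylorFiltration c m := by
  refine inf_le_inf (restrictSupport_mono R fun _ (ht : _ ≤ k) => ht.trans h)
    (Submodule.comap_mono (restrictSupport_mono R fun _ (ht : _ < k) => ht.trans_le h))

theorem X_mem_taylorFiltration (j : σ) : X j ∈ taylorFiltration c 1 := by
  refine mem_taylorFiltration.mpr ⟨(monomial_mem_restrictSupport R).mpr (.inl ?_), ?_⟩
  · simp
  · rw [taylor_X, add_sub_cancel_left, ← monomial_zero', restrictTotalDegreeLT,
      monomial_mem_restrictSupport]
    simp

theorem monomial_one_mem_taylorFiltration (s : σ →₀ ℕ) :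
    monomial s (1 : R) ∈ taylorFiltration c s.degree := by
  rw [monomial_eq, C_1, one_mul, Finsupp.prod]
  refine SetLike.prod_mem_graded _ s (fun j => X j ^ s j) fun j _ => ?_
  simpa using SetLike.pow_mem_graded (s j) (X_mem_taylorFiltration (c := c) j)

theorem restrictTotalDegree_le_taylorFiltration (k : ℕ) :
    restrictTotalDegree σ R k ≤ taylorFiltration c k := by
  rw [restrictTotalDegree, restrictSupport_eq_span, Submodule.span_le]
  rintro _ ⟨s, hs, rfl⟩
  exact taylorFiltration_mono hs (monomial_one_mem_taylorFiltration s)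

theorem totalDegree_taylor_sub_lt {p : MvPolynomial σ R} (h : taylor c p ≠ p) :
    (taylor c p - p).totalDegree < p.totalDegree := by
  have hp := restrictTotalDegree_le_taylorFiltration (c := c) p.totalDegree
    ((mem_restrictTotalDegree _ _ _).mpr le_rfl)
  exact totalDegree_lt_of_mem_restrictTotalDegreeLT hp.2 (sub_ne_zero.mpr h)

theorem eval_add_nsmul_of_taylor_eq {p : MvPolynomial σ R} (h : taylor c p = p)
    (x : σ → R) (m : ℕ) : eval (x + m • c) p = eval x p := by
  induction m with
  | zero => simp
  | succ m ih => rw [succ_nsmul, ← add_assoc, ← eval_taylor, h, ih]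

theorem eval_sum_nsmul_of_taylor_eq {ι : Type*} {c : ι → σ → R} {p : MvPolynomial σ R}
    (h : ∀ i, taylor (c i) p = p) (s : Finset ι) (k : ι → ℕ) :
    eval (∑ i ∈ s, k i • c i) p = eval 0 p := by
  classical
  induction s using Finset.induction_on with
  | empty => simp
  | insert i s hi ih =>
    rw [Finset.sum_insert hi, add_comm, eval_add_nsmul_of_taylor_eq (h i), ih]

theorem eq_C_of_forall_taylor_neg_single_eq [IsDomain R] [CharZero R] [Fintype σ]
    [DecidableEq σ] {p : MvPolynomial σ R} (h : ∀ i, taylor (-Pi.single i 1) p = p) :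
    p = C (eval 0 p) := by
  refine funext_set (fun _ => Set.range fun m : ℕ => -(m : R))
    (fun _ => Set.infinite_range_of_injective (neg_injective.comp Nat.cast_injective))
    fun x hx => ?_
  choose k hk using fun i => hx i (Set.mem_univ i)
  have hx : x = ∑ i, k i • -Pi.single i (1 : R) := by
    ext j
    simp [Finset.sum_apply, Pi.single_apply, ← hk j]
  rw [eval_C, hx, eval_sum_nsmul_of_taylor_eq h]

end MvPolynomial

theorem stmt_4_general {F : Type*} [Field F] [CharZero F] (n : ℕ)
    (φ : Fin n → (MvPolynomial (Fin n) F ≃ₐ[F] MvPolynomial (Fin n) F))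
    (hφ : ∀ i j : Fin n,
      φ i (MvPolynomial.X j) = MvPolynomial.X j - if i = j then 1 else 0)
    (J : Ideal (MvPolynomial (Fin n) F))
    (hstab : ∀ i : Fin n, ∀ f ∈ J, φ i f ∈ J) :
    J = ⊥ ∨ J = ⊤ := by
  have hφ_eq : ∀ i f, φ i f = taylor (-Pi.single i 1) f := by
    intro i
    refine AlgHom.congr_fun (φ₁ := (φ i).toAlgHom) (algHom_ext fun j => ?_)
    simp [hφ, taylor_X, Pi.single_apply, eq_comm, sub_eq_add_neg, apply_ite C]
  refine or_iff_not_imp_left.mpr fun hJ => ?_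
  obtain ⟨f, ⟨hfJ, hf0⟩, hmin⟩ := (measure totalDegree).wf.has_min {f | f ∈ J ∧ f ≠ 0}
    ((Submodule.ne_bot_iff J).mp hJ)
  have hfix : ∀ i, taylor (-Pi.single i 1) f = f := by
    intro i
    by_contra hne
    have hmem : taylor (-Pi.single i 1) f - f ∈ J := J.sub_mem (hφ_eq i f ▸ hstab i f hfJ) hfJ
    exact hmin _ ⟨hmem, sub_ne_zero.mpr hne⟩ (totalDegree_taylor_sub_lt hne)
  have hfC : f = C (eval 0 f) := eq_C_of_forall_taylor_neg_single_eq hfix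
  have hc : eval 0 f ≠ 0 := fun h => hf0 (by rw [hfC, h, map_zero])
  exact J.eq_top_of_isUnit_mem hfJ (hfC ▸ (isUnit_iff_ne_zero.mpr hc).map C)

/-- Let `F` be a field of characteristic `0`, `n ≥ 1`, and for each
`i` let `φᵢ` be the `F`-algebra automorphism of `F[t₁, …, tₙ]` with
`φᵢ(tⱼ) = tⱼ − δ_{i,j}`.  If `J` is an ideal stable under every `φᵢ`, then `J = 0` or
`J = F[t₁, …, tₙ]`. -/
theorem stmt_4 {F : Type*} [Field F] [CharZero F] (n : ℕ) (hn : 1 ≤ n)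
    (φ : Fin n → (MvPolynomial (Fin n) F ≃ₐ[F] MvPolynomial (Fin n) F))
    (hφ : ∀ i j : Fin n,
      φ i (MvPolynomial.X j) = MvPolynomial.X j - if i = j then 1 else 0)
    (J : Ideal (MvPolynomial (Fin n) F))
    (hstab : ∀ i : Fin n, ∀ f ∈ J, φ i f ∈ J) :
    J = ⊥ ∨ J = ⊤ :=
  stmt_4_general n φ hφ J hstab
end

section
/- Let F be a field of characteristic 0, n ≥ 1, and let Aₙ be the nth Weyl algebra: the unital associative F-algebra with generators X₁, …, Xₙ, Y₁, …, Yₙ and defining relations XᵢXⱼ = XⱼXᵢ and YᵢYⱼ = YⱼYᵢ for all i, j, and YᵢXⱼ − XⱼYᵢ = δ_{i,j}·1 for all i, j. Fix nonzero scalars ζ₁, …, ζₙ ∈ F. If V is an Aₙ-module containing a nonzero vector w with V = Aₙ·w and Xᵢ·w = ζᵢ·w for all i, then V is a simple Aₙ-module. Moreover, any two Aₙ-modules of this kind (for the same ζ₁, …, ζₙ) are isomorphic as Aₙ-modules via an isomorphism carrying one cyclic generating vector to the other. -/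
universe u v

/-- The defining relations of the `n`-th Weyl algebra: the `Xᵢ` commute, the `Yᵢ`
commute, and `YᵢXⱼ − XⱼYᵢ = δ_{i,j}`. -/
inductive WeylRel (F : Type u) [Field F] (n : ℕ) :
    FreeAlgebra F (Fin n ⊕ Fin n) → FreeAlgebra F (Fin n ⊕ Fin n) → Prop
  | XX (i j : Fin n) : WeylRel F n
      (FreeAlgebra.ι F (Sum.inl i) * FreeAlgebra.ι F (Sum.inl j))
      (FreeAlgebra.ι F (Sum.inl j) * FreeAlgebra.ι F (Sum.inl i))
  | YY (i j : Fin n) : WeylRel F n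
      (FreeAlgebra.ι F (Sum.inr i) * FreeAlgebra.ι F (Sum.inr j))
      (FreeAlgebra.ι F (Sum.inr j) * FreeAlgebra.ι F (Sum.inr i))
  | YX (i j : Fin n) : WeylRel F n
      (FreeAlgebra.ι F (Sum.inr i) * FreeAlgebra.ι F (Sum.inl j))
      (FreeAlgebra.ι F (Sum.inl j) * FreeAlgebra.ι F (Sum.inr i) +
        if i = j then 1 else 0)

/-- The `n`-th Weyl algebra `Aₙ` over `F`. -/
abbrev WeylAlgebra (F : Type u) [Field F] (n : ℕ) := RingQuot (WeylRel F n)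

/-- The generator `Xᵢ` of the Weyl algebra. -/
noncomputable def weylX (F : Type u) [Field F] (n : ℕ) (i : Fin n) : WeylAlgebra F n :=
  RingQuot.mkAlgHom F (WeylRel F n) (FreeAlgebra.ι F (Sum.inl i))

/-- The generator `Yᵢ` of the Weyl algebra. -/
noncomputable def weylY (F : Type u) [Field F] (n : ℕ) (i : Fin n) : WeylAlgebra F n :=
  RingQuot.mkAlgHom F (WeylRel F n) (FreeAlgebra.ι F (Sum.inr i))

/-! Let `L` be the left ideal of `Aₙ` generated by the `Xᵢ - ζᵢ`. On `F[t₁, …, tₙ]`, with `Xᵢ`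
acting as `ζᵢ - ∂ᵢ` and `Yᵢ` as multiplication by `tᵢ`, the vector `1` is a Whittaker vector of
type `ζ`, and its annihilator is exactly `L`, because modulo `L` every element of `Aₙ` is a
polynomial in the `Yᵢ`. In characteristic zero, applying `ζᵢ - Xᵢ = ∂ᵢ` repeatedly brings any
nonzero polynomial down to a nonzero constant, so every element outside `L` has a left inverse
modulo `L`: `L` is a maximal left ideal. A Whittaker module `V = Aₙ·w` of type `ζ` is a nonzero
quotient of `Aₙ ⧸ L`, hence isomorphic to it. -/

open MvPolynomial

namespace MvPolynomial

variable {σ R : Type*}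

theorem pderiv_pderiv_comm [CommRing R] (i j : σ) (p : MvPolynomial σ R) :
    pderiv i (pderiv j p) = pderiv j (pderiv i p) := by
  classical
  have h : ⁅pderiv i, pderiv j⁆ = (0 : Derivation R (MvPolynomial σ R) (MvPolynomial σ R)) :=
    derivation_ext fun k => by
      rw [Derivation.commutator_apply, pderiv_X, pderiv_X, Derivation.zero_apply]
      simp only [Pi.single_apply]
      split_ifs <;> simp
  rw [← sub_eq_zero, ← Derivation.commutator_apply, h, Derivation.zero_apply]

variable [CommSemiring R]

theorem mem_support_of_mem_support_pderiv {i : σ} {p : MvPolynomial σ R} {m : σ →₀ ℕ}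
    (hm : m ∈ (pderiv i p).support) : m + Finsupp.single i 1 ∈ p.support := by
  rw [mem_support_iff, coeff_pderiv] at hm
  exact mem_support_iff.2 (left_ne_zero_of_mul hm)

theorem totalDegree_pderiv_lt {i : σ} {p : MvPolynomial σ R} (h : pderiv i p ≠ 0) :
    (pderiv i p).totalDegree < p.totalDegree := by
  obtain ⟨m, hm, hmax⟩ := Finset.exists_mem_eq_sup _ (support_nonempty.2 h) Finsupp.degree
  have hle := le_totalDegree (mem_support_of_mem_support_pderiv hm)
  change Finsupp.degree (m + Finsupp.single i 1) ≤ _ at hle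
  rw [map_add, Finsupp.degree_single] at hle
  change Finset.sup _ Finsupp.degree < _
  omega

theorem eq_C_of_forall_pderiv_eq_zero [IsAddTorsionFree R] {p : MvPolynomial σ R}
    (h : ∀ i, pderiv i p = 0) : p = C (coeff 0 p) := by
  classical
  ext m
  rw [coeff_C]
  split_ifs with hm
  · rw [hm]
  obtain ⟨i, hi⟩ : ∃ i, m i ≠ 0 := by
    by_contra! H
    exact hm (Finsupp.ext H).symm
  have hcoeff := coeff_pderiv (i := i) p (m - Finsupp.single i 1)
  rw [h, coeff_zero, tsub_add_cancel_of_le (Finsupp.single_le_iff.2 (Nat.one_le_iff_ne_zero.2 hi)),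
    ← Nat.cast_succ, mul_comm, ← nsmul_eq_mul] at hcoeff
  exact ((nsmul_eq_zero_iff_right (Nat.succ_ne_zero _)).1 hcoeff.symm)

end MvPolynomial

namespace WeylAlgebra

variable {F : Type u} [Field F] {n : ℕ}

noncomputable def lift {B : Type*} [Semiring B] [Algebra F B] (x y : Fin n → B)
    (hxx : ∀ i j, x i * x j = x j * x i) (hyy : ∀ i j, y i * y j = y j * y i)
    (hyx : ∀ i j, y i * x j = x j * y i + if i = j then 1 else 0) :
    WeylAlgebra F n →ₐ[F] B :=
  RingQuot.liftAlgHom F ⟨FreeAlgebra.lift F (Sum.elim x y), fun _ _ h => by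
    cases h with
    | XX i j => simpa using hxx i j
    | YY i j => simpa using hyy i j
    | YX i j => split_ifs with hij <;> simpa [hij] using hyx i j⟩

section lift

variable {B : Type*} [Semiring B] [Algebra F B] (x y : Fin n → B)
  (hxx : ∀ i j, x i * x j = x j * x i) (hyy : ∀ i j, y i * y j = y j * y i)
  (hyx : ∀ i j, y i * x j = x j * y i + if i = j then 1 else 0)

@[simp]
theorem lift_weylX (i : Fin n) : lift x y hxx hyy hyx (weylX F n i) = x i := by
  rw [lift, weylX, RingQuot.liftAlgHom_mkAlgHom_apply, FreeAlgebra.lift_ι_apply, Sum.elim_inl]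

@[simp]
theorem lift_weylY (i : Fin n) : lift x y hxx hyy hyx (weylY F n i) = y i := by
  rw [lift, weylY, RingQuot.liftAlgHom_mkAlgHom_apply, FreeAlgebra.lift_ι_apply, Sum.elim_inr]

end lift

@[elab_as_elim]
theorem induction {motive : WeylAlgebra F n → Prop}
    (algebraMap : ∀ r, motive (algebraMap F (WeylAlgebra F n) r))
    (weylX : ∀ i, motive (weylX F n i)) (weylY : ∀ i, motive (weylY F n i))
    (add : ∀ a b, motive a → motive b → motive (a + b))
    (mul : ∀ a b, motive a → motive b → motive (a * b)) (a : WeylAlgebra F n) : motive a := by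
  obtain ⟨a, rfl⟩ := RingQuot.mkAlgHom_surjective F (WeylRel F n) a
  induction a using FreeAlgebra.induction with
  | grade0 r => simpa using algebraMap r
  | grade1 s => cases s with
    | inl i => exact weylX i
    | inr i => exact weylY i
  | mul a b ha hb => simpa using mul _ _ ha hb
  | add a b ha hb => simpa using add _ _ ha hb

theorem weylY_mul_weylY_comm (i j : Fin n) :
    weylY F n i * weylY F n j = weylY F n j * weylY F n i := by
  simpa only [map_mul, weylY] using RingQuot.mkAlgHom_rel F (WeylRel.YY (F := F) (n := n) i j)

theorem weylX_mul_weylY (i j : Fin n) :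
    weylX F n i * weylY F n j = weylY F n j * weylX F n i - if j = i then 1 else 0 := by
  have h := RingQuot.mkAlgHom_rel F (WeylRel.YX (F := F) (n := n) j i)
  rw [map_mul, map_add, map_mul, apply_ite (RingQuot.mkAlgHom F (WeylRel F n)), map_one,
    map_zero] at h
  exact eq_sub_of_add_eq h.symm

open scoped IsMulCommutative in
noncomputable def evalY : MvPolynomial (Fin n) F →ₐ[F] WeylAlgebra F n :=
  haveI : IsMulCommutative (Algebra.adjoin F (Set.range (weylY F n))) :=
    Algebra.isMulCommutative_adjoin F (by
      rintro _ ⟨i, rfl⟩ _ ⟨j, rfl⟩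
      exact weylY_mul_weylY_comm i j)
  (Algebra.adjoin F (Set.range (weylY F n))).val.comp
    (aeval fun i => ⟨weylY F n i, Algebra.subset_adjoin ⟨i, rfl⟩⟩)

@[simp]
theorem evalY_X (i : Fin n) : evalY (X i) = weylY F n i := by
  simp [evalY]

theorem weylX_mul_evalY (i : Fin n) (p : MvPolynomial (Fin n) F) :
    weylX F n i * evalY p = evalY p * weylX F n i - evalY (pderiv i p) := by
  induction p using MvPolynomial.induction_on with
  | C a => rw [pderiv_C, map_zero, sub_zero, ← algebraMap_eq, AlgHom.commutes, Algebra.commutes]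
  | add p q hp hq =>
    rw [map_add, map_add, mul_add, hp, hq, add_mul, map_add]
    abel
  | mul_X p j hp =>
    rw [map_mul, evalY_X, pderiv_mul, ← mul_assoc, hp, sub_mul, mul_assoc, weylX_mul_weylY i j,
      map_add, map_mul, evalY_X]
    rcases eq_or_ne i j with rfl | hij
    · rw [if_pos rfl, pderiv_X_self, mul_one, mul_sub, mul_one, mul_assoc]
      abel
    · rw [if_neg hij.symm, pderiv_X_of_ne hij.symm, mul_zero, map_zero, sub_zero, add_zero,
        mul_assoc]

variable (ζ : Fin n → F)

noncomputable def polyRep : WeylAlgebra F n →ₐ[F] Module.End F (MvPolynomial (Fin n) F) :=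
  lift (fun i => ζ i • 1 - (pderiv i).toLinearMap) (fun i => Algebra.lmul F _ (X i))
    (fun i j => by
      refine LinearMap.ext fun p => ?_
      simp only [Module.End.mul_apply, LinearMap.sub_apply, LinearMap.smul_apply,
        Module.End.one_apply, Derivation.coeFn_coe, map_sub, map_smul, pderiv_pderiv_comm i j]
      module)
    (fun i j => by rw [← map_mul, ← map_mul, mul_comm (X i)])
    (fun i j => by
      refine LinearMap.ext fun p => ?_
      simp only [Module.End.mul_apply, LinearMap.sub_apply, LinearMap.smul_apply,
        Module.End.one_apply, LinearMap.add_apply, Derivation.coeFn_coe, Algebra.coe_lmul_eq_mul,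
        LinearMap.mul_apply', pderiv_mul, pderiv_X]
      rw [Pi.single_apply]
      split_ifs <;> simp only [mul_sub, mul_smul_comm, Module.End.one_apply, LinearMap.zero_apply,
        one_mul, zero_mul] <;> abel)

theorem polyRep_weylX (i : Fin n) : polyRep ζ (weylX F n i) = ζ i • 1 - (pderiv i).toLinearMap :=
  lift_weylX ..

theorem polyRep_weylY (i : Fin n) : polyRep ζ (weylY F n i) = Algebra.lmul F _ (X i) :=
  lift_weylY ..

theorem polyRep_evalY_apply (p q : MvPolynomial (Fin n) F) : polyRep ζ (evalY p) q = p * q := by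
  have h : (polyRep ζ).comp evalY = Algebra.lmul F (MvPolynomial (Fin n) F) :=
    algHom_ext fun i => by rw [AlgHom.comp_apply, evalY_X, polyRep_weylY]
  exact congr($h p q)

noncomputable def whittakerIdeal : Submodule (WeylAlgebra F n) (WeylAlgebra F n) :=
  Submodule.span _ (Set.range fun i => weylX F n i - algebraMap F _ (ζ i))

theorem polyRep_apply_one_eq_zero {a : WeylAlgebra F n} (ha : a ∈ whittakerIdeal ζ) :
    polyRep ζ a 1 = 0 := by
  induction ha using Submodule.span_induction with
  | mem x hx =>
    obtain ⟨i, rfl⟩ := hx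
    simp [polyRep_weylX]
  | zero => simp
  | add x y _ _ hx hy => rw [map_add, LinearMap.add_apply, hx, hy, add_zero]
  | smul a x _ hx => rw [smul_eq_mul, map_mul, Module.End.mul_apply, hx, map_zero]

theorem exists_sub_evalY_mem (a : WeylAlgebra F n) : ∃ p, a - evalY p ∈ whittakerIdeal ζ := by
  suffices H : ∀ b, (∃ p, b - evalY p ∈ whittakerIdeal ζ) →
      ∃ q, a * b - evalY q ∈ whittakerIdeal ζ by
    simpa using H 1 ⟨1, by simp⟩
  induction a using WeylAlgebra.induction with
  | algebraMap r =>
    rintro b ⟨p, hp⟩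
    refine ⟨C r * p, ?_⟩
    rw [map_mul, ← algebraMap_eq, AlgHom.commutes, ← mul_sub]
    exact (whittakerIdeal ζ).smul_mem _ hp
  | weylX i =>
    rintro b ⟨p, hp⟩
    refine ⟨C (ζ i) * p - pderiv i p, ?_⟩
    have key : weylX F n i * b - evalY (C (ζ i) * p - pderiv i p) =
        evalY p * (weylX F n i - algebraMap F _ (ζ i)) + weylX F n i * (b - evalY p) := by
      rw [map_sub, map_mul, ← algebraMap_eq, AlgHom.commutes, mul_sub (weylX F n i),
        weylX_mul_evalY, mul_sub (evalY p), Algebra.commutes]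
      abel
    rw [key]
    exact add_mem ((whittakerIdeal ζ).smul_mem _ (Submodule.subset_span ⟨i, rfl⟩))
      ((whittakerIdeal ζ).smul_mem _ hp)
  | weylY i =>
    rintro b ⟨p, hp⟩
    refine ⟨X i * p, ?_⟩
    rw [map_mul, evalY_X, ← mul_sub]
    exact (whittakerIdeal ζ).smul_mem _ hp
  | add x y hx hy =>
    intro b hb
    obtain ⟨q₁, h₁⟩ := hx b hb
    obtain ⟨q₂, h₂⟩ := hy b hb
    refine ⟨q₁ + q₂, ?_⟩
    convert add_mem h₁ h₂ using 1
    rw [map_add, add_mul]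
    abel
  | mul x y hx hy =>
    intro b hb
    simpa only [mul_assoc] using hx (y * b) (hy b hb)

theorem mem_whittakerIdeal_iff {a : WeylAlgebra F n} :
    a ∈ whittakerIdeal ζ ↔ polyRep ζ a 1 = 0 := by
  refine ⟨polyRep_apply_one_eq_zero ζ, fun ha => ?_⟩
  obtain ⟨p, hp⟩ := exists_sub_evalY_mem ζ a
  have hp0 : p = 0 := by
    simpa [ha, polyRep_evalY_apply] using polyRep_apply_one_eq_zero ζ hp
  simpa [hp0] using hp

theorem exists_polyRep_apply_eq_one [CharZero F] {p : MvPolynomial (Fin n) F} (hp : p ≠ 0) :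
    ∃ c, polyRep ζ c p = 1 := by
  induction h : p.totalDegree using Nat.strong_induction_on generalizing p with
  | _ d ih =>
    by_cases hconst : ∀ i, pderiv i p = 0
    · obtain ⟨c, rfl⟩ : ∃ c, p = C c := ⟨_, eq_C_of_forall_pderiv_eq_zero hconst⟩
      refine ⟨algebraMap F _ c⁻¹, ?_⟩
      rw [AlgHom.commutes, Module.algebraMap_end_apply, smul_eq_C_mul, ← map_mul,
        inv_mul_cancel₀ (C_ne_zero.1 hp), map_one]
    · obtain ⟨i, hi⟩ := not_forall.1 hconst
      obtain ⟨c, hc⟩ := ih _ (h ▸ totalDegree_pderiv_lt hi) hi rfl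
      -- `ζᵢ - Xᵢ` acts as `∂ᵢ`
      refine ⟨c * (algebraMap F _ (ζ i) - weylX F n i), ?_⟩
      simpa [polyRep_weylX] using hc

theorem isCoatom_whittakerIdeal [CharZero F] : IsCoatom (whittakerIdeal ζ) := by
  refine ⟨fun htop => ?_, fun J hJ => ?_⟩
  · have h1 := (mem_whittakerIdeal_iff ζ).1 (htop ▸ Submodule.mem_top : (1 : WeylAlgebra F n) ∈ _)
    simp at h1
  obtain ⟨a, haJ, haL⟩ := SetLike.exists_of_lt hJ
  obtain ⟨c, hc⟩ := exists_polyRep_apply_eq_one ζ (mt (mem_whittakerIdeal_iff ζ).2 haL)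
  have hsub : c * a - 1 ∈ J := hJ.le <| (mem_whittakerIdeal_iff ζ).2 <| by simp [hc]
  have h1 : (1 : WeylAlgebra F n) ∈ J := by
    simpa using sub_mem (J.smul_mem c haJ) hsub
  exact (Ideal.eq_top_iff_one J).2 h1

variable {ζ}

theorem exists_quotient_whittakerIdeal_equiv [CharZero F] {V : Type*} [AddCommGroup V]
    [Module (WeylAlgebra F n) V] {w : V} (hw : w ≠ 0)
    (hcyc : ∀ v : V, ∃ a : WeylAlgebra F n, a • w = v)
    (hwhit : ∀ i, weylX F n i • w = algebraMap F (WeylAlgebra F n) (ζ i) • w) :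
    ∃ e : (WeylAlgebra F n ⧸ whittakerIdeal ζ) ≃ₗ[WeylAlgebra F n] V,
      e (Submodule.Quotient.mk 1) = w := by
  let φ := LinearMap.toSpanSingleton (WeylAlgebra F n) V w
  have hle : whittakerIdeal ζ ≤ LinearMap.ker φ := Submodule.span_le.2 <| by
    rintro _ ⟨i, rfl⟩
    simp [φ, sub_smul, hwhit]
  have hker : LinearMap.ker φ = whittakerIdeal ζ :=
    ((isCoatom_whittakerIdeal ζ).le_iff.1 hle).resolve_left fun htop =>
      hw (by simpa [φ] using (LinearMap.ker_eq_top.1 htop ▸ rfl : φ 1 = 0))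
  exact ⟨(Submodule.quotEquivOfEq _ _ hker.symm).trans (φ.quotKerEquivOfSurjective hcyc),
    one_smul _ w⟩

end WeylAlgebra

theorem stmt_5_general {F : Type u} [Field F] [CharZero F] (n : ℕ)
    (ζ : Fin n → F)
    (V : Type v) [AddCommGroup V] [Module (WeylAlgebra F n) V]
    (w : V) (hw : w ≠ 0)
    (hcyc : ∀ v : V, ∃ a : WeylAlgebra F n, a • w = v)
    (hwhit : ∀ i : Fin n,
      weylX F n i • w = algebraMap F (WeylAlgebra F n) (ζ i) • w) :
    IsSimpleModule (WeylAlgebra F n) V ∧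
      ∀ (V' : Type v) [AddCommGroup V'] [Module (WeylAlgebra F n) V'] (w' : V'),
        w' ≠ 0 → (∀ v : V', ∃ a : WeylAlgebra F n, a • w' = v) →
        (∀ i : Fin n,
          weylX F n i • w' = algebraMap F (WeylAlgebra F n) (ζ i) • w') →
        ∃ e : V ≃ₗ[WeylAlgebra F n] V', e w = w' := by
  obtain ⟨e, he⟩ := WeylAlgebra.exists_quotient_whittakerIdeal_equiv hw hcyc hwhit
  have : IsSimpleModule (WeylAlgebra F n) (WeylAlgebra F n ⧸ WeylAlgebra.whittakerIdeal ζ) :=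
    isSimpleModule_iff_isCoatom.2 (WeylAlgebra.isCoatom_whittakerIdeal ζ)
  refine ⟨IsSimpleModule.congr e.symm, fun V' _ _ w' hw' hcyc' hwhit' => ?_⟩
  obtain ⟨e', he'⟩ := WeylAlgebra.exists_quotient_whittakerIdeal_equiv hw' hcyc' hwhit'
  exact ⟨e.symm.trans e', by rw [LinearEquiv.trans_apply, ← he, e.symm_apply_apply, he']⟩

/-- Over a field of characteristic `0`, every Whittaker module
`V = Aₙ·w`, `Xᵢ·w = ζᵢ·w` (all `ζᵢ ≠ 0`, `w ≠ 0`) for the `n`-th Weyl algebra is simple,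
and any two Whittaker modules of the same type `ζ` are isomorphic via an isomorphism
matching the cyclic Whittaker vectors. -/
theorem stmt_5 {F : Type u} [Field F] [CharZero F] (n : ℕ) (hn : 1 ≤ n)
    (ζ : Fin n → F) (hζ : ∀ i, ζ i ≠ 0)
    (V : Type v) [AddCommGroup V] [Module (WeylAlgebra F n) V]
    (w : V) (hw : w ≠ 0)
    (hcyc : ∀ v : V, ∃ a : WeylAlgebra F n, a • w = v)
    (hwhit : ∀ i : Fin n,
      weylX F n i • w = algebraMap F (WeylAlgebra F n) (ζ i) • w) :
    IsSimpleModule (WeylAlgebra F n) V ∧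
      ∀ (V' : Type v) [AddCommGroup V'] [Module (WeylAlgebra F n) V'] (w' : V'),
        w' ≠ 0 → (∀ v : V', ∃ a : WeylAlgebra F n, a • w' = v) →
        (∀ i : Fin n,
          weylX F n i • w' = algebraMap F (WeylAlgebra F n) (ζ i) • w') →
        ∃ e : V ≃ₗ[WeylAlgebra F n] V', e w = w' :=
  stmt_5_general n ζ V w hw hcyc hwhit
end

section
/- Let F be a field of characteristic 0, β ∈ F nonzero, and φ the F-algebra automorphism of F[t] determined by φ(t) = t + β. Then the only ideals J of F[t] satisfying φ(J) ⊆ J are J = 0 and J = F[t]. -/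
/-!
The automorphism `φ` is the Taylor shift `f ↦ f(t + β)`. A nonzero stable ideal is generated
by some `g ≠ 0` with `g ∣ g(t + β)`; both sides have the same degree and leading coefficient, so
`g(t + β) = g`. Then `g` takes the value `g(0)` at the infinitely many points `nβ` (this is where
characteristic `0` enters), hence `g` is a nonzero constant and the ideal is everything.
-/

open Polynomial

namespace Polynomial

theorem algHom_apply_eq_taylor {R : Type*} [CommSemiring R] (φ : R[X] →ₐ[R] R[X]) {r : R}
    (hφ : φ X = X + C r) (f : R[X]) : φ f = taylor r f :=
  AlgHom.congr_fun (algHom_ext (hφ.trans (taylor_X r).symm) : φ = taylorAlgHom r) f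

theorem taylor_eq_self_of_dvd {R : Type*} [CommRing R] [IsDomain R] {r : R} {p : R[X]}
    (h : p ∣ taylor r p) : taylor r p = p :=
  (eq_of_dvd_of_natDegree_le_of_leadingCoeff h (natDegree_taylor p r).le
    (leadingCoeff_taylor r p).symm).symm

theorem eq_C_of_periodic_eval {R : Type*} [CommRing R] [IsDomain R] [CharZero R] {r : R}
    (hr : r ≠ 0) {p : R[X]} (hp : Function.Periodic p.eval r) : p = C (p.eval 0) := by
  apply eq_of_infinite_eval_eq
  refine Set.Infinite.mono (s := Set.range fun n : ℕ => (n : R) * r) ?_ ?_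
  · rintro _ ⟨n, rfl⟩
    simpa using hp.nat_mul_eq n
  · exact Set.infinite_range_of_injective ((mul_left_injective₀ hr).comp Nat.cast_injective)

theorem eq_C_of_taylor_eq_self {R : Type*} [CommRing R] [IsDomain R] [CharZero R] {r : R}
    (hr : r ≠ 0) {p : R[X]} (hp : taylor r p = p) : p = C (p.eval 0) :=
  eq_C_of_periodic_eval hr fun x => by
    change eval (x + r) p = eval x p
    rw [← taylor_eval, hp]

end Polynomial

/-- Let `F` be a field of characteristic `0`, `β ≠ 0`, and `φ` the
`F`-algebra automorphism of `F[t]` with `φ(t) = t + β`.  Then the only `φ`-stable ideals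
of `F[t]` are `0` and `F[t]`. -/
theorem stmt_6 {F : Type*} [Field F] [CharZero F] (β : F) (hβ : β ≠ 0)
    (φ : Polynomial F ≃ₐ[F] Polynomial F)
    (hφ : φ X = X + C β)
    (J : Ideal (Polynomial F)) (hstab : ∀ f ∈ J, φ f ∈ J) :
    J = ⊥ ∨ J = ⊤ := by
  obtain ⟨g, rfl⟩ := (IsPrincipalIdealRing.principal J).principal
  rw [Ideal.submodule_span_eq] at hstab ⊢
  rcases eq_or_ne g 0 with rfl | hg
  · simp
  right
  have hdvd : g ∣ taylor β g := by
    rw [← algHom_apply_eq_taylor φ.toAlgHom hφ]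
    exact Ideal.mem_span_singleton.mp (hstab g (Ideal.mem_span_singleton_self g))
  have hconst := eq_C_of_taylor_eq_self hβ (taylor_eq_self_of_dvd hdvd)
  have hunit : IsUnit g := by
    rw [hconst, isUnit_C, isUnit_iff_ne_zero]
    rintro h
    exact hg (by rw [hconst, h, C_0])
  exact Ideal.span_singleton_eq_top.mpr hunit
end

section
/- Let F be a field of characteristic p > 2, β ∈ F nonzero, and φ the F-algebra automorphism of F[t] determined by φ(t) = t + β. Then the set of φ-fixed elements {f ∈ F[t] : φ(f) = f} equals the F-subalgebra of F[t] generated by the single element t^p − β^{p−1}t, i.e., the set of polynomials in t^p − β^{p−1}t with coefficients in F. -/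
/-!
The automorphism `φ` is the Taylor shift `f ↦ f(t + β)`, and `u = t^p − β^{p−1}t` is fixed by
it because `(t + β)^p = t^p + β^p`. Conversely, a shift-invariant `f` takes the same value at
all the points `kβ`, `k ∈ 𝔽_p`, which are exactly the `p` roots of `u`; hence `u ∣ f − f(0)`,
the quotient is again invariant and of smaller degree, and induction on the degree writes `f`
as a polynomial in `u`.
-/

open Polynomial

section CommRing

variable {R : Type*} [CommRing R]

theorem monic_X_pow_sub_C_mul_X {n : ℕ} (hn : 1 < n) (a : R) : (X ^ n - C a * X).Monic := by
  nontriviality R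
  exact monic_X_pow_sub ((degree_C_mul_X_le a).trans_lt (by exact_mod_cast hn))

theorem natDegree_X_pow_sub_C_mul_X [Nontrivial R] {n : ℕ} (hn : 1 < n) (a : R) :
    (X ^ n - C a * X).natDegree = n := by
  rw [natDegree_sub_eq_left_of_natDegree_lt, natDegree_X_pow]
  exact (natDegree_C_mul_le a X).trans_lt (by rwa [natDegree_X, natDegree_X_pow])

theorem eval_natCast_mul_eq_eval_zero_of_taylor_eq {β : R} {f : R[X]} (hf : taylor β f = f)
    (n : ℕ) : f.eval (n * β) = f.eval 0 := by
  induction n with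
  | zero => simp
  | succ n ih => rw [Nat.cast_succ, add_one_mul, ← taylor_eval, hf, ih]

theorem eval_cast_mul_eq_eval_zero_of_taylor_eq {n : ℕ} [NeZero n] {β : R} {f : R[X]}
    (hf : taylor β f = f) (k : ZMod n) : f.eval (ZMod.cast k * β) = f.eval 0 := by
  rw [← ZMod.natCast_val, eval_natCast_mul_eq_eval_zero_of_taylor_eq hf]

variable (p : ℕ) [Fact p.Prime] [CharP R p] (β : R)

theorem taylor_X_pow_char_sub_C_mul_X :
    taylor β (X ^ p - C (β ^ (p - 1)) * X) = X ^ p - C (β ^ (p - 1)) * X := by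
  rw [map_sub, taylor_mul, taylor_pow, taylor_X, taylor_C, add_pow_char, ← C_pow,
    ← pow_sub_one_mul (Fact.out : p.Prime).ne_zero β, C_mul]
  ring

theorem eval_cast_mul_X_pow_char_sub_C_mul_X (k : ZMod p) :
    (X ^ p - C (β ^ (p - 1)) * X).eval (ZMod.cast k * β) = 0 := by
  have hk : (ZMod.cast k : R) ^ p = ZMod.cast k := by rw [← ZMod.cast_pow dvd_rfl, ZMod.pow_card]
  simp only [eval_sub, eval_mul, eval_pow, eval_X, eval_C, mul_pow, hk]
  rw [← pow_sub_one_mul (Fact.out : p.Prime).ne_zero β]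
  ring

end CommRing

section Field

variable {F : Type*} [Field F] {p : ℕ} [Fact p.Prime] [CharP F p] {β : F}

theorem X_pow_char_sub_C_mul_X_dvd (hβ : β ≠ 0) {g : F[X]}
    (hg : ∀ k : ZMod p, g.eval (ZMod.cast k * β) = 0) : X ^ p - C (β ^ (p - 1)) * X ∣ g := by
  have hp : 1 < p := (Fact.out : p.Prime).one_lt
  set u : F[X] := X ^ p - C (β ^ (p - 1)) * X
  have hu : u.Monic := monic_X_pow_sub_C_mul_X hp _
  have hdeg : u.natDegree = p := natDegree_X_pow_sub_C_mul_X hp _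
  rw [← modByMonic_eq_zero_iff_dvd hu]
  have hinj : Function.Injective fun k : ZMod p => (ZMod.cast k : F) * β :=
    fun a b hab => (ZMod.castHom dvd_rfl F).injective (mul_right_cancel₀ hβ hab)
  refine eq_zero_of_natDegree_lt_card_of_eval_eq_zero _ hinj (fun k => ?_) ?_
  · rw [modByMonic_eq_sub_mul_div g u, eval_sub, eval_mul, hg,
      eval_cast_mul_X_pow_char_sub_C_mul_X, zero_mul, sub_zero]
  · rw [ZMod.card, ← hdeg]
    refine natDegree_modByMonic_lt g hu (ne_of_apply_ne natDegree ?_)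
    rw [hdeg, natDegree_one]
    omega

theorem mem_adjoin_X_pow_char_sub_C_mul_X_of_taylor_eq (hβ : β ≠ 0) {f : F[X]}
    (hf : taylor β f = f) : f ∈ Algebra.adjoin F {X ^ p - C (β ^ (p - 1)) * X} := by
  have hp : 1 < p := (Fact.out : p.Prime).one_lt
  set u : F[X] := X ^ p - C (β ^ (p - 1)) * X
  have hu : u ≠ 0 := (monic_X_pow_sub_C_mul_X hp _).ne_zero
  induction hn : f.natDegree using Nat.strong_induction_on generalizing f with
  | _ n ih =>
  obtain ⟨q, hq⟩ : u ∣ f - C (f.eval 0) := X_pow_char_sub_C_mul_X_dvd hβ fun k => by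
    rw [eval_sub, eval_C, eval_cast_mul_eq_eval_zero_of_taylor_eq hf, sub_self]
  have hfq : f = C (f.eval 0) + u * q := by rw [← hq]; ring
  rcases eq_or_ne q 0 with rfl | hq0
  · rw [hfq, mul_zero, add_zero]
    exact Subalgebra.algebraMap_mem _ _
  have hqfix : taylor β q = q := mul_left_cancel₀ hu <| calc
    u * taylor β q = taylor β (u * q) := by rw [taylor_mul, taylor_X_pow_char_sub_C_mul_X]
    _ = u * q := by rw [← hq, map_sub, taylor_C, hf]
  have hqdeg : q.natDegree < n := by
    rw [← hn, hfq, natDegree_C_add, natDegree_mul hu hq0, natDegree_X_pow_sub_C_mul_X hp]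
    omega
  rw [hfq]
  exact add_mem (Subalgebra.algebraMap_mem _ _)
    (mul_mem (Algebra.self_mem_adjoin_singleton F u) (ih _ hqdeg hqfix rfl))

theorem setOf_taylor_eq_self_eq_adjoin (hβ : β ≠ 0) :
    {f : F[X] | taylor β f = f} = Algebra.adjoin F {X ^ p - C (β ^ (p - 1)) * X} := by
  refine Set.Subset.antisymm (fun f => mem_adjoin_X_pow_char_sub_C_mul_X_of_taylor_eq hβ) ?_
  refine Algebra.adjoin_le (S := AlgHom.equalizer (taylorAlgHom β) (AlgHom.id F F[X])) ?_
  rintro _ rfl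
  exact taylor_X_pow_char_sub_C_mul_X p β

end Field

theorem stmt_7_general {F : Type*} [Field F] (p : ℕ) [Fact p.Prime] [CharP F p]
    (β : F) (hβ : β ≠ 0)
    (φ : Polynomial F ≃ₐ[F] Polynomial F)
    (hφ : φ X = X + C β) :
    {f : Polynomial F | φ f = f} =
      ↑(Algebra.adjoin F {X ^ p - C (β ^ (p - 1)) * X} :
        Subalgebra F (Polynomial F)) := by
  have hφβ : (φ : F[X] →ₐ[F] F[X]) = taylorAlgHom β := algHom_ext (by simpa using hφ)
  have hφf (f : F[X]) : φ f = taylor β f := DFunLike.congr_fun hφβ f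
  simp only [hφf]
  exact setOf_taylor_eq_self_eq_adjoin hβ

/-- Let `F` be a field of characteristic `p > 2`, `β ≠ 0`, and `φ` the
`F`-algebra automorphism of `F[t]` with `φ(t) = t + β`.  Then the `φ`-fixed elements of
`F[t]` are exactly the polynomials in `t^p − β^{p−1}t`, i.e. the `F`-subalgebra
generated by `t^p − β^{p−1}t`. -/
theorem stmt_7 {F : Type*} [Field F] (p : ℕ) [Fact p.Prime] [CharP F p] (hp : 2 < p)
    (β : F) (hβ : β ≠ 0)
    (φ : Polynomial F ≃ₐ[F] Polynomial F)
    (hφ : φ X = X + C β) :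
    {f : Polynomial F | φ f = f} =
      ↑(Algebra.adjoin F {X ^ p - C (β ^ (p - 1)) * X} :
        Subalgebra F (Polynomial F)) :=
  stmt_7_general p β hβ φ hφ
end

section
/- Let F be a field of characteristic p > 2, β ∈ F nonzero, and φ the F-algebra automorphism of F[t] determined by φ(t) = t + β. Then every ideal J of F[t] with φ(J) ⊆ J is generated, as an ideal of F[t], by its set of φ-fixed elements {f ∈ J : φ(f) = f}. -/
open Polynomial

/-- Let `F` be a field of characteristic `p > 2`, `β ≠ 0`, and `φ` the
`F`-algebra automorphism of `F[t]` with `φ(t) = t + β`.  Then every `φ`-stable ideal `J`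
of `F[t]` is generated, as an ideal, by its set of `φ`-fixed elements. -/
theorem stmt_8 {F : Type*} [Field F] (p : ℕ) [Fact p.Prime] [CharP F p] (hp : 2 < p)
    (β : F) (hβ : β ≠ 0)
    (φ : Polynomial F ≃ₐ[F] Polynomial F)
    (hφ : φ X = X + C β)
    (J : Ideal (Polynomial F)) (hstab : ∀ f ∈ J, φ f ∈ J) :
    J = Ideal.span {f : Polynomial F | f ∈ J ∧ φ f = f} := by
  have halg : (φ : Polynomial F →ₐ[F] Polynomial F) = aeval (X + C β) :=
    Polynomial.algHom_ext (by simpa using hφ)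
  have key : ∀ f : Polynomial F, φ f = f.comp (X + C β) := by
    intro f
    have := congrArg (fun ψ : Polynomial F →ₐ[F] Polynomial F => ψ f) halg
    simpa [comp_eq_aeval] using this
  obtain ⟨g, hg0'⟩ : Submodule.IsPrincipal J := inferInstance
  have hg : J = Ideal.span {g} := hg0'
  have hgJ : g ∈ J := hg ▸ Ideal.subset_span rfl
  apply le_antisymm
  · -- J ⊆ span of fixed elements: suffices that g is fixed
    by_cases hg0 : g = 0
    · rw [hg, hg0]
      simp [Ideal.span_le]
    have hfix : φ g = g := by
      have hφgJ : φ g ∈ J := hstab g hgJ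
      rw [hg, Ideal.mem_span_singleton] at hφgJ
      obtain ⟨h, hh⟩ := hφgJ
      -- degrees: natDegree (φ g) = natDegree g
      have hdeg : (φ g).natDegree = g.natDegree := by
        rw [key, natDegree_comp, natDegree_X_add_C, mul_one]
      have hlc : (φ g).leadingCoeff = g.leadingCoeff := by
        rw [key, leadingCoeff_comp (by simp [natDegree_X_add_C]),
          leadingCoeff_X_add_C, one_pow, mul_one]
      have hh0 : h ≠ 0 := by
        rintro rfl
        simp only [mul_zero] at hh
        exact hg0 (φ.injective (by simpa using hh))
      have hdh : h.natDegree = 0 := by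
        have := hdeg
        rw [hh, natDegree_mul hg0 hh0] at this
        omega
      obtain ⟨a, rfl⟩ := natDegree_eq_zero.mp hdh
      have hc0 : a = 1 := by
        have := hlc
        rw [hh, leadingCoeff_mul, leadingCoeff_C] at this
        have hglc : g.leadingCoeff ≠ 0 := leadingCoeff_ne_zero.mpr hg0
        field_simp at this
        exact this
      rw [hh, hc0]
      simp
    rw [hg]
    exact Ideal.span_mono (Set.singleton_subset_iff.mpr ⟨hg ▸ hgJ, hfix⟩)
  · exact Ideal.span_le.mpr fun f hf => hf.1
end

section
/- Let F be an algebraically closed field of characteristic p > 2 and β ∈ F nonzero. Let A be the unital associative F-algebra with generators X, Y and the single defining relation XY − YX = β, and set t = YX in A. Let V be a simple A-module possessing a vector w₀ with V = A·w₀ and X·w₀ = ζ·w₀ for some nonzero ζ ∈ F. Then dim_F V = p, and there exist λ ∈ F and a basis v₀, …, v_{p−1} of V such that (reading subscripts modulo p) t·v_k = (λ − kβ)·v_k, X·v_k = ζ·v_{k+1}, and Y·v_k = ζ^{−1}(λ − (k−1)β)·v_{k−1}. Moreover, the vector w = v₀ + v₁ + ⋯ + v_{p−1} satisfies V = A·w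 and X·w = ζ·w, and the ideal {f ∈ F[x] : f(t)·w = 0} of F[x] is generated by x^p − β^{p−1}x − (λ^p − β^{p−1}λ). -/
open Polynomial

universe u v

/-- The defining relation `XY − YX = β`, i.e. `XY = YX + β`
(here `true ↦ X`, `false ↦ Y`). -/
inductive WRel (F : Type u) [Field F] (β : F) :
    FreeAlgebra F Bool → FreeAlgebra F Bool → Prop
  | rel : WRel F β
      (FreeAlgebra.ι F true * FreeAlgebra.ι F false)
      (FreeAlgebra.ι F false * FreeAlgebra.ι F true +
        algebraMap F (FreeAlgebra F Bool) β)

/-- The `F`-algebra with generators `X, Y` and defining relation `XY − YX = β`. -/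
abbrev WAlgebra (F : Type u) [Field F] (β : F) := RingQuot (WRel F β)

/-- The generator `X`. -/
noncomputable def waX (F : Type u) [Field F] (β : F) : WAlgebra F β :=
  RingQuot.mkAlgHom F (WRel F β) (FreeAlgebra.ι F true)

/-- The generator `Y`. -/
noncomputable def waY (F : Type u) [Field F] (β : F) : WAlgebra F β :=
  RingQuot.mkAlgHom F (WRel F β) (FreeAlgebra.ι F false)

/-- The element `t = YX`. -/
noncomputable def waT (F : Type u) [Field F] (β : F) : WAlgebra F β :=
  waY F β * waX F β

/-!
Since `X f(t) = f(t + β) X` and `Y f(t + β) = f(t) Y`, for every polynomial `q` with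
`q(x + β) = q(x)` the subspace `q(t) F[t] w₀` is a submodule of `V`, hence `0` or `V`.
Applied to `∏_{a ∈ ℤ/p} (x + aβ)` this shows that the ideal `I = {f | f(t) w₀ = 0}` is nonzero.
As `I` is stable under `x ↦ x + β`, a root `λ` of its generator produces the `p` distinct roots
`λ - aβ`; their product `x^p - β^{p-1} x - (λ^p - β^{p-1} λ)` is shift-invariant and not a unit,
so it lies in `I` and generates it. The Lagrange factors `v_a = ∏_{b ≠ a} (t - (λ - bβ)) w₀` are
then nonzero `t`-eigenvectors with distinct eigenvalues which `X` and `Y` permute cyclically, so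
they form a basis of `V`, and `f(t) ∑ v_a = ∑ f(λ - aβ) v_a` gives the annihilator of `∑ v_a`.
-/

open Lagrange (nodal)

theorem SemiconjBy.aeval {R A : Type*} [CommSemiring R] [Semiring A] [Algebra R A] {a x y : A}
    (h : SemiconjBy a x y) (f : R[X]) : SemiconjBy a (aeval x f) (aeval y f) := by
  induction f using Polynomial.induction_on' with
  | add f g hf hg => simpa only [map_add] using hf.add_right hg
  | monomial n c =>
    simp only [aeval_monomial]
    exact SemiconjBy.mul_right (Algebra.commute_algebraMap_right c a) (h.pow_right n)

theorem Polynomial.comp_X_add_C_comp_X_sub_C {R : Type*} [CommRing R] (f : R[X]) (β : R) :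
    (f.comp (X - C β)).comp (X + C β) = f := by
  simp [comp_assoc]

theorem Polynomial.IsRoot.add_natCast_mul_of_dvd_comp {R : Type*} [CommRing R] {g : R[X]}
    {β lam : R} (hg : g ∣ g.comp (X + C β)) (h : g.IsRoot lam) (n : ℕ) :
    g.IsRoot (lam + n * β) := by
  induction n with
  | zero => simpa using h
  | succ n ih =>
    have := eval_dvd (x := lam + n * β) hg
    rw [ih.eq_zero, zero_dvd_iff, eval_comp] at this
    simpa [add_mul, add_assoc] using this

theorem Lagrange.nodal_univ_dvd_iff {K ι : Type*} [Field K] [Fintype ι] {v : ι → K}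
    (hv : Function.Injective v) {f : K[X]} :
    nodal Finset.univ v ∣ f ↔ ∀ i, f.IsRoot (v i) := by
  refine ⟨fun ⟨g, hg⟩ i => ?_, fun h => ?_⟩
  · simp [hg, eval_nodal_at_node (Finset.mem_univ i)]
  · exact Finset.prod_dvd_of_coprime ((pairwise_coprime_X_sub_C hv).set_pairwise _)
      fun i _ => dvd_iff_isRoot.mpr (h i)

theorem Lagrange.not_isUnit_nodal {K ι : Type*} [Field K] {s : Finset ι} (hs : s.Nonempty)
    (v : ι → K) : ¬IsUnit (nodal s v) := fun h => by
  simpa [natDegree_nodal, hs.ne_empty] using natDegree_eq_zero_of_isUnit h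

theorem ZMod.finEquiv_apply {n : ℕ} [NeZero n] (k : Fin n) : ZMod.finEquiv n k = (k : ℕ) := by
  cases n with
  | zero => exact absurd rfl (NeZero.ne 0)
  | succ m => exact (Fin.cast_val_eq_self k).symm

section annIdealAt

variable (R : Type*) {A M : Type*} [CommRing R] [Ring A] [Algebra R A] [AddCommGroup M]
  [Module A M]

def Polynomial.annIdealAt (a : A) (m : M) : Ideal R[X] where
  carrier := {f | aeval a f • m = 0}
  add_mem' {f g} hf hg := by simp_all [add_smul]
  zero_mem' := by simp
  smul_mem' q f hf := by simp_all [mul_smul]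

variable {R}

theorem Polynomial.mem_annIdealAt {a : A} {m : M} {f : R[X]} :
    f ∈ annIdealAt R a m ↔ aeval a f • m = 0 := Iff.rfl

theorem Polynomial.aeval_smul_ne_zero_of_degree_lt {K : Type*} [Field K] [Algebra K A] {a : A}
    {m : M} {P f : K[X]} (hP : annIdealAt K a m = Ideal.span {P}) (hf : f ≠ 0)
    (hdeg : f.degree < P.degree) : aeval a f • m ≠ 0 := fun h =>
  not_dvd_of_degree_lt hf hdeg (Ideal.mem_span_singleton.1 (hP ▸ mem_annIdealAt.2 h))

end annIdealAt

section eigenval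

variable {F : Type*} [Field F] {p : ℕ} [CharP F p]

/-- Indexing by `ZMod p` builds in the paper's convention of reading subscripts modulo `p`. -/
def eigenval (p : ℕ) (lam β : F) (a : ZMod p) : F := lam - (a.cast : F) * β

theorem eigenval_add_one (lam β : F) (a : ZMod p) :
    eigenval p lam β (a + 1) = eigenval p lam β a - β := by
  simp only [eigenval, ZMod.cast_add dvd_rfl, ZMod.cast_one dvd_rfl]
  ring

theorem eigenval_natCast (lam β : F) (k : ℕ) : eigenval p lam β k = lam - k * β := by
  rw [eigenval, ZMod.cast_natCast dvd_rfl]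

theorem eigenval_injective {β : F} (hβ : β ≠ 0) (lam : F) :
    Function.Injective (eigenval p lam β) := fun _ _ h =>
  ZMod.castHom_injective F <| mul_right_cancel₀ hβ <| sub_right_injective h

theorem isRoot_eigenval_of_dvd_comp [NeZero p] {g : F[X]} {lam β : F}
    (hg : g ∣ g.comp (X + C β)) (h : g.IsRoot lam) (a : ZMod p) :
    g.IsRoot (eigenval p lam β a) := by
  have hshift : lam + ((-a).val : F) * β = eigenval p lam β a := by
    simp [eigenval, ZMod.natCast_val, ZMod.cast_neg dvd_rfl, sub_eq_add_neg]
  exact hshift ▸ h.add_natCast_mul_of_dvd_comp hg (-a).val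

theorem X_sub_C_eigenval_comp (lam β : F) (a : ZMod p) :
    (X - C (eigenval p lam β a)).comp (X + C β) = X - C (eigenval p lam β (a + 1)) := by
  simp only [sub_comp, X_comp, C_comp, eigenval_add_one, C_sub]
  ring

variable [NeZero p]

theorem nodal_eigenval_comp (lam β : F) :
    (nodal Finset.univ (eigenval p lam β)).comp (X + C β) =
      nodal Finset.univ (eigenval p lam β) := by
  simp_rw [nodal, prod_comp, X_sub_C_eigenval_comp]
  exact Fintype.prod_equiv (Equiv.addRight 1) _ _ fun _ => rfl

theorem nodal_erase_eigenval_comp (lam β : F) (a : ZMod p) :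
    (nodal (Finset.univ.erase a) (eigenval p lam β)).comp (X + C β) =
      nodal (Finset.univ.erase (a + 1)) (eigenval p lam β) := by
  refine mul_left_cancel₀ (X_sub_C_ne_zero (eigenval p lam β (a + 1))) ?_
  calc (X - C (eigenval p lam β (a + 1))) *
        (nodal (Finset.univ.erase a) (eigenval p lam β)).comp (X + C β)
      = ((X - C (eigenval p lam β a)) *
          nodal (Finset.univ.erase a) (eigenval p lam β)).comp (X + C β) := by
        rw [mul_comp, X_sub_C_eigenval_comp]
    _ = nodal Finset.univ (eigenval p lam β) := by
        rw [← Lagrange.nodal_eq_mul_nodal_erase (Finset.mem_univ a), nodal_eigenval_comp]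
    _ = _ := Lagrange.nodal_eq_mul_nodal_erase (Finset.mem_univ _)

theorem nodal_eigenval [Fact p.Prime] {β : F} (hβ : β ≠ 0) (lam : F) :
    nodal Finset.univ (eigenval p lam β) =
      X ^ p - C (β ^ (p - 1)) * X - C (lam ^ p - β ^ (p - 1) * lam) := by
  have hp : 1 < p := (Fact.out : p.Prime).one_lt
  have hdeg : (C (β ^ (p - 1)) * X + C (lam ^ p - β ^ (p - 1) * lam)).degree < (p : WithBot ℕ) :=
    degree_linear_le.trans_lt (by exact_mod_cast hp)
  have hmonic : (X ^ p - C (β ^ (p - 1)) * X - C (lam ^ p - β ^ (p - 1) * lam)).Monic := by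
    rw [sub_sub]; exact monic_X_pow_sub hdeg
  refine (eq_of_monic_of_dvd_of_natDegree_le Lagrange.nodal_monic hmonic
    ((Lagrange.nodal_univ_dvd_iff (eigenval_injective hβ lam)).2 fun a => ?_) ?_).symm
  · have hβp : β ^ (p - 1) * β = β ^ p := by rw [← pow_succ, Nat.sub_add_cancel hp.le]
    have hap : (a.cast : F) ^ p = a.cast := by rw [← ZMod.cast_pow dvd_rfl, ZMod.pow_card]
    simp only [IsRoot, eigenval, eval_sub, eval_pow, eval_mul, eval_C, eval_X, sub_pow_char,
      mul_pow, hap]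
    linear_combination (a.cast : F) * hβp
  · rw [Lagrange.natDegree_nodal, Finset.card_univ, ZMod.card, sub_sub]
    refine (natDegree_eq_of_degree_eq_some ?_).le
    rw [degree_sub_eq_left_of_degree_lt (by rwa [degree_X_pow]), degree_X_pow]

end eigenval

noncomputable def WAlgebra.eigenvec {F : Type u} [Field F] (p : ℕ) [NeZero p] (lam β : F)
    {V : Type v} [AddCommGroup V] [Module (WAlgebra F β) V] (w₀ : V) (a : ZMod p) : V :=
  aeval (waT F β) (nodal (Finset.univ.erase a) (eigenval p lam β)) • w₀

namespace WAlgebra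

variable {F : Type u} [Field F] {β ζ lam : F}

theorem waX_mul_waY :
    waX F β * waY F β = waY F β * waX F β + algebraMap F (WAlgebra F β) β := by
  simpa [waX, waY] using RingQuot.mkAlgHom_rel F (WRel.rel (F := F) (β := β))

theorem semiconjBy_waX_waT :
    SemiconjBy (waX F β) (waT F β) (waT F β + algebraMap F (WAlgebra F β) β) := by
  rw [SemiconjBy, waT, ← mul_assoc, waX_mul_waY, add_mul]

theorem semiconjBy_waY_waT :
    SemiconjBy (waY F β) (waT F β + algebraMap F (WAlgebra F β) β) (waT F β) := by
  rw [SemiconjBy, waT, mul_assoc, waX_mul_waY, mul_add]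

theorem waX_mul_aeval_waT (f : F[X]) :
    waX F β * aeval (waT F β) f = aeval (waT F β) (f.comp (X + C β)) * waX F β := by
  rw [aeval_comp, map_add, aeval_X, aeval_C]
  exact semiconjBy_waX_waT.aeval f

theorem waY_mul_aeval_waT_comp (f : F[X]) :
    waY F β * aeval (waT F β) (f.comp (X + C β)) = aeval (waT F β) f * waY F β := by
  rw [aeval_comp, map_add, aeval_X, aeval_C]
  exact semiconjBy_waY_waT.aeval f

theorem adjoin_waX_waY : Algebra.adjoin F {waX F β, waY F β} = ⊤ := by
  have : {waX F β, waY F β} =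
      RingQuot.mkAlgHom F (WRel F β) '' Set.range (FreeAlgebra.ι F) := by
    ext; simp [waX, waY, or_comm, eq_comm]
  rw [this, ← AlgHom.map_adjoin, FreeAlgebra.adjoin_range_ι, Algebra.map_top,
    AlgHom.range_eq_top]
  exact RingQuot.mkAlgHom_surjective F _

variable {V : Type v} [AddCommGroup V] [Module (WAlgebra F β) V] {w₀ : V}

theorem eigenvec_ne_zero {p : ℕ} [NeZero p]
    (hI : annIdealAt F (waT F β) w₀ = Ideal.span {nodal Finset.univ (eigenval p lam β)})
    (a : ZMod p) : eigenvec p lam β w₀ a ≠ 0 := by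
  refine aeval_smul_ne_zero_of_degree_lt hI Lagrange.nodal_ne_zero ?_
  rw [Lagrange.degree_nodal, Lagrange.degree_nodal]
  exact_mod_cast Finset.card_erase_lt_of_mem (Finset.mem_univ a)

variable [Module F V] [IsScalarTower F (WAlgebra F β) V]

theorem smul_mem_of_waX_waY {W : Submodule F V} (hX : ∀ v ∈ W, waX F β • v ∈ W)
    (hY : ∀ v ∈ W, waY F β • v ∈ W) (a : WAlgebra F β) {v : V} (hv : v ∈ W) : a • v ∈ W := by
  have ha : a ∈ Algebra.adjoin F {waX F β, waY F β} := by
    rw [adjoin_waX_waY]; exact Algebra.mem_top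
  induction ha using Algebra.adjoin_induction generalizing v with
  | mem x hx => rcases hx with rfl | rfl; exacts [hX v hv, hY v hv]
  | algebraMap c => rw [algebraMap_smul]; exact W.smul_mem c hv
  | add x y _ _ hx hy => rw [add_smul]; exact W.add_mem (hx hv) (hy hv)
  | mul x y _ _ hx hy => rw [mul_smul]; exact hx (hy hv)

theorem eq_bot_or_eq_top_of_waX_waY [IsSimpleModule (WAlgebra F β) V] (W : Submodule F V)
    (hX : ∀ v ∈ W, waX F β • v ∈ W) (hY : ∀ v ∈ W, waY F β • v ∈ W) : W = ⊥ ∨ W = ⊤ := by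
  let N : Submodule (WAlgebra F β) V :=
    { W.toAddSubmonoid with smul_mem' := fun a _ hv => smul_mem_of_waX_waY hX hY a hv }
  have hN : (N : Set V) = W := rfl
  rcases eq_bot_or_eq_top N with h | h
  · left; rw [← SetLike.coe_set_eq, ← hN, h]; rfl
  · right; rw [← SetLike.coe_set_eq, ← hN, h]; rfl

theorem waX_smul_aeval_waT_smul (hX : waX F β • w₀ = ζ • w₀) (f : F[X]) :
    waX F β • aeval (waT F β) f • w₀ = ζ • aeval (waT F β) (f.comp (X + C β)) • w₀ := by
  rw [← mul_smul, waX_mul_aeval_waT, mul_smul, hX, smul_comm]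

theorem waY_smul_aeval_waT_comp_smul (hζ : ζ ≠ 0) (hX : waX F β • w₀ = ζ • w₀) (f : F[X]) :
    waY F β • aeval (waT F β) (f.comp (X + C β)) • w₀ = ζ⁻¹ • aeval (waT F β) (f * X) • w₀ := by
  have hY : waY F β • w₀ = ζ⁻¹ • waT F β • w₀ := by
    rw [waT, mul_smul, hX, smul_comm, inv_smul_smul₀ hζ]
  rw [← mul_smul, waY_mul_aeval_waT_comp, mul_smul, hY, smul_comm, ← mul_smul, map_mul, aeval_X]

theorem comp_X_add_C_mem_annIdealAt (hζ : ζ ≠ 0) (hX : waX F β • w₀ = ζ • w₀) {f : F[X]}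
    (hf : f ∈ annIdealAt F (waT F β) w₀) : f.comp (X + C β) ∈ annIdealAt F (waT F β) w₀ := by
  have h := waX_smul_aeval_waT_smul hX f
  rw [mem_annIdealAt.1 hf, smul_zero, eq_comm, smul_eq_zero] at h
  exact h.resolve_left hζ

theorem mem_annIdealAt_or_exists_dvd [IsSimpleModule (WAlgebra F β) V] (hζ : ζ ≠ 0)
    (hX : waX F β • w₀ = ζ • w₀) {q : F[X]} (hq : q.comp (X + C β) = q) :
    q ∈ annIdealAt F (waT F β) w₀ ∨ ∃ f, q ∣ f ∧ f - 1 ∈ annIdealAt F (waT F β) w₀ := by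
  have hq' : q.comp (X - C β) = q := by
    conv_lhs => rw [← hq]
    simp [comp_assoc]
  let orbit : F[X] →ₗ[F] V :=
    ((LinearMap.toSpanSingleton (WAlgebra F β) V w₀).restrictScalars F).comp
      (aeval (waT F β)).toLinearMap
  have horbit (f : F[X]) : orbit f = aeval (waT F β) f • w₀ := rfl
  let W := ((Ideal.span {q}).restrictScalars F).map orbit
  have hmemW {f : F[X]} (hf : q ∣ f) : aeval (waT F β) f • w₀ ∈ W :=
    ⟨f, Ideal.mem_span_singleton.2 hf, rfl⟩
  have hXW : ∀ v ∈ W, waX F β • v ∈ W := by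
    rintro _ ⟨f, hf, rfl⟩
    rw [horbit, waX_smul_aeval_waT_smul hX]
    exact W.smul_mem ζ <| hmemW <|
      hq ▸ map_dvd (compRingHom (X + C β)) (Ideal.mem_span_singleton.1 hf)
  have hYW : ∀ v ∈ W, waY F β • v ∈ W := by
    rintro _ ⟨f, hf, rfl⟩
    rw [horbit, ← comp_X_add_C_comp_X_sub_C f β, waY_smul_aeval_waT_comp_smul hζ hX]
    exact W.smul_mem ζ⁻¹ <| hmemW <| Dvd.dvd.mul_right
      (hq' ▸ map_dvd (compRingHom (X - C β)) (Ideal.mem_span_singleton.1 hf)) X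
  rcases eq_bot_or_eq_top_of_waX_waY W hXW hYW with h | h
  · exact Or.inl ((Submodule.mem_bot F).1 (h ▸ hmemW dvd_rfl))
  · obtain ⟨f, hf, hfw⟩ := h.symm ▸ Submodule.mem_top (x := w₀)
    refine Or.inr ⟨f, Ideal.mem_span_singleton.1 hf, ?_⟩
    rw [mem_annIdealAt, map_sub, map_one, sub_smul, one_smul, ← horbit, hfw, sub_self]

theorem annIdealAt_ne_bot (p : ℕ) [NeZero p] [CharP F p] [IsSimpleModule (WAlgebra F β) V]
    (hζ : ζ ≠ 0) (hX : waX F β • w₀ = ζ • w₀) : annIdealAt F (waT F β) w₀ ≠ ⊥ := by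
  intro hbot
  rcases mem_annIdealAt_or_exists_dvd hζ hX (nodal_eigenval_comp (p := p) 0 β)
    with h | ⟨f, hf, h⟩ <;> rw [hbot, Ideal.mem_bot] at h
  · exact Lagrange.nodal_ne_zero h
  · exact Lagrange.not_isUnit_nodal Finset.univ_nonempty _
      (isUnit_of_dvd_one (sub_eq_zero.1 h ▸ hf))

theorem exists_annIdealAt_eq_span_nodal (p : ℕ) [NeZero p] [CharP F p] [IsAlgClosed F]
    [IsSimpleModule (WAlgebra F β) V] (hβ : β ≠ 0) (hζ : ζ ≠ 0) (hX : waX F β • w₀ = ζ • w₀)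
    (hw₀ : w₀ ≠ 0) :
    ∃ lam : F, annIdealAt F (waT F β) w₀ = Ideal.span {nodal Finset.univ (eigenval p lam β)} := by
  obtain ⟨g, hg⟩ := (IsPrincipalIdealRing.principal (annIdealAt F (waT F β) w₀)).principal
  have hmem {f : F[X]} : f ∈ annIdealAt F (waT F β) w₀ ↔ g ∣ f := by
    rw [hg]; exact Ideal.mem_span_singleton
  have hg0 : g ≠ 0 := fun h => annIdealAt_ne_bot p hζ hX (by
    rw [hg, h]; exact Ideal.span_singleton_eq_bot.2 rfl)
  have hg1 : ¬IsUnit g := fun h => hw₀ <| by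
    simpa [mem_annIdealAt] using hmem.2 (h.dvd : g ∣ 1)
  obtain ⟨lam, hlam⟩ := IsAlgClosed.exists_root g fun h => hg1 (isUnit_iff_degree_eq_zero.2 h)
  have hPg : nodal Finset.univ (eigenval p lam β) ∣ g :=
    (Lagrange.nodal_univ_dvd_iff (eigenval_injective hβ lam)).2 <| isRoot_eigenval_of_dvd_comp
      (hmem.1 (comp_X_add_C_mem_annIdealAt hζ hX (hmem.2 dvd_rfl))) hlam
  have hPI : nodal Finset.univ (eigenval p lam β) ∈ annIdealAt F (waT F β) w₀ := by
    refine (mem_annIdealAt_or_exists_dvd hζ hX (nodal_eigenval_comp lam β)).resolve_right ?_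
    rintro ⟨f, hf, h1⟩
    exact Lagrange.not_isUnit_nodal Finset.univ_nonempty _
      (isUnit_of_dvd_one ((dvd_sub_right hf).1 (hPg.trans (hmem.1 h1))))
  exact ⟨lam, le_antisymm (fun f hf => Ideal.mem_span_singleton.2 (hPg.trans (hmem.1 hf)))
    ((Ideal.span_singleton_le_iff_mem _).2 hPI)⟩

variable {p : ℕ} [NeZero p]

theorem waT_smul_eigenvec
    (hI : annIdealAt F (waT F β) w₀ = Ideal.span {nodal Finset.univ (eigenval p lam β)})
    (a : ZMod p) :
    waT F β • eigenvec p lam β w₀ a = eigenval p lam β a • eigenvec p lam β w₀ a := by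
  have h : (X - C (eigenval p lam β a)) * nodal (Finset.univ.erase a) (eigenval p lam β)
      ∈ annIdealAt F (waT F β) w₀ := by
    rw [hI, ← Lagrange.nodal_eq_mul_nodal_erase (Finset.mem_univ a)]
    exact Ideal.mem_span_singleton_self _
  rwa [mem_annIdealAt, map_mul, mul_smul, map_sub, aeval_X, aeval_C, sub_smul, algebraMap_smul,
    sub_eq_zero] at h

theorem hasEigenvector_eigenvec
    (hI : annIdealAt F (waT F β) w₀ = Ideal.span {nodal Finset.univ (eigenval p lam β)})
    (a : ZMod p) :
    (Algebra.lsmul F F V (waT F β)).HasEigenvector (eigenval p lam β a) (eigenvec p lam β w₀ a) :=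
  ⟨Module.End.mem_eigenspace_iff.2 (waT_smul_eigenvec hI a), eigenvec_ne_zero hI a⟩

theorem aeval_waT_smul_sum_eigenvec
    (hI : annIdealAt F (waT F β) w₀ = Ideal.span {nodal Finset.univ (eigenval p lam β)})
    (f : F[X]) :
    aeval (waT F β) f • ∑ a, eigenvec p lam β w₀ a =
      ∑ a, f.eval (eigenval p lam β a) • eigenvec p lam β w₀ a := by
  refine Finset.smul_sum.trans (Finset.sum_congr rfl fun a _ => ?_)
  rw [← Module.End.aeval_apply_of_hasEigenvector (hasEigenvector_eigenvec hI a),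
    aeval_algHom_apply, Algebra.lsmul_apply]

variable [CharP F p]

theorem waX_smul_eigenvec (hX : waX F β • w₀ = ζ • w₀) (a : ZMod p) :
    waX F β • eigenvec p lam β w₀ a = ζ • eigenvec p lam β w₀ (a + 1) := by
  rw [eigenvec, waX_smul_aeval_waT_smul hX, nodal_erase_eigenval_comp, eigenvec]

theorem waY_smul_eigenvec (hζ : ζ ≠ 0) (hX : waX F β • w₀ = ζ • w₀)
    (hI : annIdealAt F (waT F β) w₀ = Ideal.span {nodal Finset.univ (eigenval p lam β)})
    (a : ZMod p) :
    waY F β • eigenvec p lam β w₀ (a + 1) =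
      (ζ⁻¹ * eigenval p lam β a) • eigenvec p lam β w₀ a := by
  rw [eigenvec, ← nodal_erase_eigenval_comp, waY_smul_aeval_waT_comp_smul hζ hX, mul_comm,
    map_mul, aeval_X, mul_smul, ← eigenvec, waT_smul_eigenvec hI, smul_smul]

theorem linearIndependent_eigenvec (hβ : β ≠ 0)
    (hI : annIdealAt F (waT F β) w₀ = Ideal.span {nodal Finset.univ (eigenval p lam β)}) :
    LinearIndependent F (eigenvec p lam β w₀) :=
  Module.End.eigenvectors_linearIndependent' _ _ (eigenval_injective hβ lam) _
    (hasEigenvector_eigenvec hI)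

theorem span_eigenvec_eq_top [IsSimpleModule (WAlgebra F β) V] (hζ : ζ ≠ 0)
    (hX : waX F β • w₀ = ζ • w₀)
    (hI : annIdealAt F (waT F β) w₀ = Ideal.span {nodal Finset.univ (eigenval p lam β)}) :
    Submodule.span F (Set.range (eigenvec p lam β w₀)) = ⊤ := by
  set W := Submodule.span F (Set.range (eigenvec p lam β w₀))
  have hstable (x : WAlgebra F β) (hx : ∀ a, x • eigenvec p lam β w₀ a ∈ W) :
      ∀ v ∈ W, x • v ∈ W := fun _ hv =>
    (Submodule.span_le (p := W.comap (Algebra.lsmul F F V x)).2 (Set.range_subset_iff.2 hx)) hv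
  have hmem (c : F) (a : ZMod p) : c • eigenvec p lam β w₀ a ∈ W :=
    W.smul_mem c (Submodule.subset_span ⟨a, rfl⟩)
  have hXW : ∀ v ∈ W, waX F β • v ∈ W := hstable _ fun a => by
    rw [waX_smul_eigenvec hX]; exact hmem _ _
  have hYW : ∀ v ∈ W, waY F β • v ∈ W := hstable _ fun a => by
    rw [← sub_add_cancel a 1, waY_smul_eigenvec hζ hX hI]; exact hmem _ _
  refine (eq_bot_or_eq_top_of_waX_waY W hXW hYW).resolve_left fun h => eigenvec_ne_zero hI 0 ?_
  exact (Submodule.mem_bot F).1 (h ▸ Submodule.subset_span ⟨0, rfl⟩)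

theorem mem_annIdealAt_sum_eigenvec_iff (hβ : β ≠ 0)
    (hI : annIdealAt F (waT F β) w₀ = Ideal.span {nodal Finset.univ (eigenval p lam β)})
    {f : F[X]} :
    f ∈ annIdealAt F (waT F β) (∑ a, eigenvec p lam β w₀ a) ↔
      nodal Finset.univ (eigenval p lam β) ∣ f := by
  rw [mem_annIdealAt, aeval_waT_smul_sum_eigenvec hI,
    Lagrange.nodal_univ_dvd_iff (eigenval_injective hβ lam)]
  refine ⟨fun h a => Fintype.linearIndependent_iff.1 (linearIndependent_eigenvec hβ hI) _ h a,
    fun h => Finset.sum_eq_zero fun a _ => ?_⟩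
  rw [(h a).eq_zero, zero_smul]

theorem sum_eigenvec_ne_zero (hβ : β ≠ 0)
    (hI : annIdealAt F (waT F β) w₀ = Ideal.span {nodal Finset.univ (eigenval p lam β)}) :
    ∑ a, eigenvec p lam β w₀ a ≠ 0 := fun h =>
  one_ne_zero <| Fintype.linearIndependent_iff.1 (linearIndependent_eigenvec hβ hI) (fun _ => 1)
    (by simpa using h) 0

theorem waX_smul_sum_eigenvec (hX : waX F β • w₀ = ζ • w₀) :
    waX F β • ∑ a, eigenvec p lam β w₀ a = ζ • ∑ a, eigenvec p lam β w₀ a := by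
  simp_rw [Finset.smul_sum, waX_smul_eigenvec hX]
  exact Fintype.sum_equiv (Equiv.addRight 1) _ _ fun _ => rfl

end WAlgebra

open WAlgebra

theorem stmt_11_general {F : Type u} [Field F] [IsAlgClosed F]
    (p : ℕ) [Fact p.Prime] [CharP F p]
    (β : F) (hβ : β ≠ 0) (ζ : F) (hζ : ζ ≠ 0)
    (V : Type v) [AddCommGroup V] [Module (WAlgebra F β) V]
    [Module F V] [IsScalarTower F (WAlgebra F β) V]
    (hsimple : IsSimpleModule (WAlgebra F β) V)
    (w₀ : V) (hcyc : ∀ v : V, ∃ a : WAlgebra F β, a • w₀ = v)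
    (hX : waX F β • w₀ = ζ • w₀) :
    Module.finrank F V = p ∧
    ∃ (lam : F) (u : ℕ → V),
      (∀ k : ℕ, u (k + p) = u k) ∧
      (∃ b : Module.Basis (Fin p) F V, ∀ k : Fin p, b k = u (k : ℕ)) ∧
      (∀ k : ℕ,
        waT F β • u k = (lam - (k : F) * β) • u k ∧
        waX F β • u k = ζ • u (k + 1) ∧
        waY F β • u (k + 1) = (ζ⁻¹ * (lam - (k : F) * β)) • u k) ∧
      (∀ v : V, ∃ a : WAlgebra F β, a • (∑ k ∈ Finset.range p, u k) = v) ∧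
      waX F β • (∑ k ∈ Finset.range p, u k) = ζ • (∑ k ∈ Finset.range p, u k) ∧
      (∀ f : Polynomial F,
        Polynomial.aeval (waT F β) f • (∑ k ∈ Finset.range p, u k) = 0 ↔
          f ∈ Ideal.span {X ^ p - C (β ^ (p - 1)) * X -
            C (lam ^ p - β ^ (p - 1) * lam)}) := by
  have hw₀ : w₀ ≠ 0 := by
    have := IsSimpleModule.nontrivial (WAlgebra F β) V
    obtain ⟨v, hv⟩ := exists_ne (0 : V)
    obtain ⟨a, rfl⟩ := hcyc v
    exact fun h => hv (by rw [h, smul_zero])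
  obtain ⟨lam, hI⟩ := exists_annIdealAt_eq_span_nodal p hβ hζ hX hw₀
  let b := Module.Basis.mk (linearIndependent_eigenvec hβ hI) (span_eigenvec_eq_top hζ hX hI).ge
  have hsum : ∑ k ∈ Finset.range p, eigenvec p lam β w₀ k = ∑ a, eigenvec p lam β w₀ a := by
    rw [Finset.sum_range fun k => eigenvec p lam β w₀ k]
    exact Fintype.sum_equiv (ZMod.finEquiv p).toEquiv _ _ fun k => by simp [ZMod.finEquiv_apply]
  refine ⟨by rw [Module.finrank_eq_card_basis b, ZMod.card], lam, fun k => eigenvec p lam β w₀ k,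
    fun k => by simp, ⟨b.reindex (ZMod.finEquiv p).toEquiv.symm, fun k => by
      simp [b, ZMod.finEquiv_apply]⟩, fun k => ⟨?_, ?_, ?_⟩, ?_, ?_, fun f => ?_⟩
  · rw [← eigenval_natCast (p := p)]; exact waT_smul_eigenvec hI k
  · simpa only [Nat.cast_succ] using waX_smul_eigenvec hX (k : ZMod p)
  · simpa only [Nat.cast_succ, eigenval_natCast] using waY_smul_eigenvec hζ hX hI (k : ZMod p)
  · simpa only [hsum, ← Submodule.mem_span_singleton, IsSimpleModule.span_singleton_eq_top _
      (sum_eigenvec_ne_zero hβ hI)] using fun v => Submodule.mem_top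
  · simpa only [hsum] using waX_smul_sum_eigenvec hX
  · rw [hsum, ← nodal_eigenval hβ lam, Ideal.mem_span_singleton,
      ← mem_annIdealAt_sum_eigenvec_iff hβ hI, mem_annIdealAt]

/-- Over an algebraically closed field of characteristic `p > 2`, a
simple Whittaker module of type `ζ` for the algebra `XY − YX = β` (`β ≠ 0`) has
dimension `p`, with a basis `v₀, …, v_{p−1}` (indices mod `p`) on which
`t·v_k = (λ − kβ)·v_k`, `X·v_k = ζ·v_{k+1}`, `Y·v_k = ζ⁻¹(λ − (k−1)β)·v_{k−1}`;
moreover `w = v₀ + ⋯ + v_{p−1}` is a cyclic Whittaker vector of type `ζ`, and the ideal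
`{f ∈ F[x] : f(t)·w = 0}` is generated by `x^p − β^{p−1}x − (λ^p − β^{p−1}λ)`. -/
theorem stmt_11 {F : Type u} [Field F] [IsAlgClosed F]
    (p : ℕ) [Fact p.Prime] [CharP F p] (hp : 2 < p)
    (β : F) (hβ : β ≠ 0) (ζ : F) (hζ : ζ ≠ 0)
    (V : Type v) [AddCommGroup V] [Module (WAlgebra F β) V]
    [Module F V] [IsScalarTower F (WAlgebra F β) V]
    (hsimple : IsSimpleModule (WAlgebra F β) V)
    (w₀ : V) (hcyc : ∀ v : V, ∃ a : WAlgebra F β, a • w₀ = v)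
    (hX : waX F β • w₀ = ζ • w₀) :
    Module.finrank F V = p ∧
    ∃ (lam : F) (u : ℕ → V),
      (∀ k : ℕ, u (k + p) = u k) ∧
      (∃ b : Module.Basis (Fin p) F V, ∀ k : Fin p, b k = u (k : ℕ)) ∧
      (∀ k : ℕ,
        waT F β • u k = (lam - (k : F) * β) • u k ∧
        waX F β • u k = ζ • u (k + 1) ∧
        waY F β • u (k + 1) = (ζ⁻¹ * (lam - (k : F) * β)) • u k) ∧
      (∀ v : V, ∃ a : WAlgebra F β, a • (∑ k ∈ Finset.range p, u k) = v) ∧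
      waX F β • (∑ k ∈ Finset.range p, u k) = ζ • (∑ k ∈ Finset.range p, u k) ∧
      (∀ f : Polynomial F,
        Polynomial.aeval (waT F β) f • (∑ k ∈ Finset.range p, u k) = 0 ↔
          f ∈ Ideal.span {X ^ p - C (β ^ (p - 1)) * X -
            C (lam ^ p - β ^ (p - 1) * lam)}) :=
  stmt_11_general p β hβ ζ hζ V hsimple w₀ hcyc hX
end

section
/- Let F be a field and q ∈ F with q ≠ 0 and q ≠ ±1. Let R = F[c][K, K^{−1}] be the ring of Laurent polynomials in the variable K over the polynomial ring F[c], and let φ be the F-algebra automorphism of R determined by φ(c) = c and φ(K) = q^{−2}K. Then every ideal J of R with φ(J) ⊆ J is generated, as an ideal of R, by its set of φ-fixed elements {r ∈ J : φ(r) = r}. -/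
/-!
The automorphism multiplies the coefficient of `T ^ n` by `s ^ n`, where `s = q⁻²`, so it grades
`R` by the weights `s ^ n ∈ F`, and a stable ideal `J` contains the weight components of its
elements: if `f ∈ J` has a weight `μ ≠ l`, then `φ f - μ • f ∈ J` has fewer weights and the same
`l`-component as `f` up to the nonzero factor `l - μ`. A component of weight `s ^ m` becomes fixed
after multiplication by the unit `T ^ (-m)`, so `J` is generated by fixed elements.
-/

open LaurentPolynomial
open scoped Polynomial

namespace LaurentPolynomial

section Weights

variable {F A : Type*} [DivInvMonoid F] [Semiring A]

open Classical in
noncomputable def weights (s : F) (f : A[T;T⁻¹]) : Finset F :=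
  f.coeff.support.image (s ^ ·)

open Classical in
noncomputable def weightComponent (s l : F) (f : A[T;T⁻¹]) : A[T;T⁻¹] :=
  .ofCoeff (f.coeff.filter (s ^ · = l))

lemma mem_weights {s l : F} {f : A[T;T⁻¹]} :
    l ∈ weights s f ↔ ∃ n, f.coeff n ≠ 0 ∧ s ^ n = l := by
  simp [weights]

open Classical in
lemma coeff_weightComponent (s l : F) (f : A[T;T⁻¹]) (n : ℤ) :
    (weightComponent s l f).coeff n = if s ^ n = l then f.coeff n else 0 :=
  rfl

lemma weightComponent_eq_self {s l : F} {f : A[T;T⁻¹]} (h : ∀ n, f.coeff n ≠ 0 → s ^ n = l) :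
    weightComponent s l f = f := by
  ext n
  rw [coeff_weightComponent]
  split_ifs with hn
  · rfl
  · exact (not_imp_comm.mp (h n) hn).symm

lemma sum_weightComponent (s : F) (f : A[T;T⁻¹]) :
    ∑ l ∈ weights s f, weightComponent s l f = f := by
  classical
  ext n
  simp only [AddMonoidAlgebra.coeff_sum, Finset.sum_apply', coeff_weightComponent]
  rw [Finset.sum_ite_eq]
  split_ifs with hn
  · rfl
  · by_contra h
    exact hn (mem_weights.mpr ⟨n, Ne.symm h, rfl⟩)

end Weights

section Twist

variable {F A : Type*} [Field F] [Ring A] [Algebra F A]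

open Classical in
lemma weights_subset_erase {s μ : F} {f g : A[T;T⁻¹]}
    (hg : ∀ n, g.coeff n = (s ^ n - μ) • f.coeff n) :
    weights s g ⊆ (weights s f).erase μ := by
  intro l hl
  obtain ⟨n, hn, rfl⟩ := mem_weights.mp hl
  rw [hg] at hn
  refine Finset.mem_erase.mpr ⟨fun h => hn ?_, mem_weights.mpr ⟨n, fun h0 => hn ?_, rfl⟩⟩
  · rw [h, sub_self, zero_smul]
  · rw [h0, smul_zero]

lemma weightComponent_eq_smul {s μ : F} {f g : A[T;T⁻¹]}
    (hg : ∀ n, g.coeff n = (s ^ n - μ) • f.coeff n) (l : F) :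
    weightComponent s l g = (l - μ) • weightComponent s l f := by
  ext n
  rw [AddMonoidAlgebra.coeff_smul_apply, coeff_weightComponent, coeff_weightComponent]
  split_ifs with h
  · rw [hg, h]
  · rw [smul_zero]

lemma weightComponent_mem {s : F} {φ : A[T;T⁻¹] → A[T;T⁻¹]}
    (hφ : ∀ f n, (φ f).coeff n = s ^ n • f.coeff n) {J : Ideal A[T;T⁻¹]}
    (hJ : ∀ f ∈ J, φ f ∈ J) {f : A[T;T⁻¹]} (hf : f ∈ J) (l : F) :
    weightComponent s l f ∈ J := by
  classical
  induction hk : (weights s f).card using Nat.strong_induction_on generalizing f with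
  | _ k ih =>
  by_cases hl : ∀ n, f.coeff n ≠ 0 → s ^ n = l
  · rwa [weightComponent_eq_self hl]
  push Not at hl
  obtain ⟨m, hm, hml⟩ := hl
  set g := φ f - s ^ m • f
  have hg : ∀ n, g.coeff n = (s ^ n - s ^ m) • f.coeff n := fun n => by
    rw [AddMonoidAlgebra.coeff_sub, Finsupp.sub_apply, hφ, AddMonoidAlgebra.coeff_smul_apply,
      sub_smul]
  have hgJ : g ∈ J := J.sub_mem (hJ f hf) (Submodule.smul_of_tower_mem J _ hf)
  have hcard : (weights s g).card < k := by
    refine hk ▸ (Finset.card_le_card (weights_subset_erase hg)).trans_lt ?_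
    exact Finset.card_erase_lt_of_mem (mem_weights.mpr ⟨m, hm, rfl⟩)
  have hlm : l - s ^ m ≠ 0 := sub_ne_zero.mpr (Ne.symm hml)
  have := Submodule.smul_of_tower_mem J (l - s ^ m)⁻¹ (ih _ hcard (f := g) hgJ rfl)
  rwa [weightComponent_eq_smul hg, smul_smul, inv_mul_cancel₀ hlm, one_smul] at this

lemma coeff_T_mul (m n : ℤ) (f : A[T;T⁻¹]) : (T m * f).coeff n = f.coeff (n - m) := by
  rw [T, AddMonoidAlgebra.coeff_single_mul_apply, one_mul, neg_add_eq_sub]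

lemma map_T_neg_mul_weightComponent {s : F} (hs : s ≠ 0) {φ : A[T;T⁻¹] → A[T;T⁻¹]}
    (hφ : ∀ f n, (φ f).coeff n = s ^ n • f.coeff n) (f : A[T;T⁻¹]) (m : ℤ) :
    φ (T (-m) * weightComponent s (s ^ m) f) = T (-m) * weightComponent s (s ^ m) f := by
  ext n
  rw [hφ, coeff_T_mul, sub_neg_eq_add, coeff_weightComponent]
  split_ifs with h
  · rw [zpow_add₀ hs, mul_eq_right₀ (zpow_ne_zero m hs)] at h
    rw [h, one_smul]
  · rw [smul_zero]

theorem ideal_eq_span_fixed {s : F} (hs : s ≠ 0) {φ : A[T;T⁻¹] → A[T;T⁻¹]}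
    (hφ : ∀ f n, (φ f).coeff n = s ^ n • f.coeff n) {J : Ideal A[T;T⁻¹]}
    (hJ : ∀ f ∈ J, φ f ∈ J) : J = Ideal.span {f | f ∈ J ∧ φ f = f} := by
  refine le_antisymm (fun f hf => ?_) (Ideal.span_le.mpr fun f hf => hf.1)
  rw [← sum_weightComponent s f]
  refine Ideal.sum_mem _ fun l hl => ?_
  obtain ⟨m, -, rfl⟩ := mem_weights.mp hl
  have hfixed : T (-m) * weightComponent s (s ^ m) f ∈ {f | f ∈ J ∧ φ f = f} :=
    ⟨J.mul_mem_left _ (weightComponent_mem hφ hJ hf _), map_T_neg_mul_weightComponent hs hφ f m⟩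
  have := Ideal.mul_mem_left _ (T m) (Ideal.subset_span hfixed)
  rwa [← mul_assoc, ← T_add, add_neg_cancel, T_zero, one_mul] at this

end Twist

section RingHom

variable {F A G : Type*} [Semifield F] [Semiring A] [Algebra F A]
  [FunLike G A[T;T⁻¹] A[T;T⁻¹]] [RingHomClass G A[T;T⁻¹] A[T;T⁻¹]]

lemma map_T_of_map_T_one {φ : G} {s : F} (hs : s ≠ 0) (h1 : φ (T 1) = s • T 1) (n : ℤ) :
    φ (T n) = s ^ n • T n := by
  have hneg : φ (T (-1)) = s⁻¹ • T (-1) := by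
    refine left_inv_eq_right_inv (a := s • T 1) ?_ ?_
    · rw [← h1, ← map_mul, ← T_add, neg_add_cancel, T_zero, map_one]
    · rw [smul_mul_smul_comm, ← T_add, add_neg_cancel, T_zero, mul_inv_cancel₀ hs, one_smul]
  induction n using Int.induction_on with
  | zero => simp [T_zero]
  | succ i ih => rw [T_add, map_mul, ih, h1, smul_mul_smul_comm, ← T_add, ← zpow_add_one₀ hs]
  | pred i ih =>
    rw [T_sub, map_mul, ih, hneg, smul_mul_smul_comm, ← T_sub, ← zpow_sub_one₀ hs]

lemma coeff_map_of_map_T_one {φ : G} {s : F} (hs : s ≠ 0) (hC : ∀ a, φ (C a) = C a)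
    (h1 : φ (T 1) = s • T 1) (f : A[T;T⁻¹]) (n : ℤ) :
    (φ f).coeff n = s ^ n • f.coeff n := by
  induction f using LaurentPolynomial.induction_on' with
  | add f g hf hg =>
    simp only [map_add, AddMonoidAlgebra.coeff_add, Finsupp.add_apply, hf, hg, smul_add]
  | C_mul_T m a =>
    rw [map_mul, hC, map_T_of_map_T_one hs h1, mul_smul_comm, AddMonoidAlgebra.coeff_smul_apply,
      ← single_eq_C_mul_T, AddMonoidAlgebra.coeff_single, Finsupp.single_apply]
    split_ifs with h
    · rw [h]
    · rw [smul_zero, smul_zero]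

end RingHom

lemma map_C_of_map_C_X {F : Type*} [Field F] (φ : F[X][T;T⁻¹] →ₐ[F] F[X][T;T⁻¹])
    (hX : φ (C Polynomial.X) = C Polynomial.X) (p : F[X]) : φ (C p) = C p := by
  have hφC : (φ : F[X][T;T⁻¹] →+* F[X][T;T⁻¹]).comp C = C := by
    refine Polynomial.ringHom_ext (fun a => ?_) hX
    simpa [LaurentPolynomial.algebraMap_apply, Polynomial.algebraMap_apply] using φ.commutes a
  exact DFunLike.congr_fun hφC p

end LaurentPolynomial

theorem stmt_16_general {F : Type*} [Field F] (q : F) (hq0 : q ≠ 0)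
    (φ : LaurentPolynomial (Polynomial F) ≃ₐ[F] LaurentPolynomial (Polynomial F))
    (hφc : φ (LaurentPolynomial.C Polynomial.X) = LaurentPolynomial.C Polynomial.X)
    (hφK : φ (LaurentPolynomial.T 1) =
      LaurentPolynomial.C (Polynomial.C ((q ^ 2)⁻¹)) * LaurentPolynomial.T 1)
    (J : Ideal (LaurentPolynomial (Polynomial F)))
    (hstab : ∀ f ∈ J, φ f ∈ J) :
    J = Ideal.span {f : LaurentPolynomial (Polynomial F) | f ∈ J ∧ φ f = f} := by
  have hs : (q ^ 2)⁻¹ ≠ 0 := inv_ne_zero (pow_ne_zero 2 hq0)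
  have hT : φ (T 1) = (q ^ 2)⁻¹ • T 1 := by
    rw [hφK, Algebra.smul_def, LaurentPolynomial.algebraMap_apply, Polynomial.algebraMap_eq]
  exact ideal_eq_span_fixed hs
    (coeff_map_of_map_T_one hs (map_C_of_map_C_X φ.toAlgHom hφc) hT) hstab

/-- Let `F` be a field and `q ∈ F` with `q ≠ 0`, `q ≠ ±1`.  Let
`R = F[c][K, K⁻¹]` and let `φ` be the `F`-algebra automorphism of `R` with `φ(c) = c`
and `φ(K) = q⁻²K`.  Then every `φ`-stable ideal of `R` is generated, as an ideal of `R`,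
by its set of `φ`-fixed elements. -/
theorem stmt_16 {F : Type*} [Field F] (q : F) (hq0 : q ≠ 0) (hq1 : q ≠ 1)
    (hqm1 : q ≠ -1)
    (φ : LaurentPolynomial (Polynomial F) ≃ₐ[F] LaurentPolynomial (Polynomial F))
    (hφc : φ (LaurentPolynomial.C Polynomial.X) = LaurentPolynomial.C Polynomial.X)
    (hφK : φ (LaurentPolynomial.T 1) =
      LaurentPolynomial.C (Polynomial.C ((q ^ 2)⁻¹)) * LaurentPolynomial.T 1)
    (J : Ideal (LaurentPolynomial (Polynomial F)))
    (hstab : ∀ f ∈ J, φ f ∈ J) :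
    J = Ideal.span {f : LaurentPolynomial (Polynomial F) | f ∈ J ∧ φ f = f} :=
  stmt_16_general q hq0 φ hφc hφK J hstab
end
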